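/- arXiv:1911.07077 — 6 statements merged into one kernel-verified Lean document; each statement's English description precedes it below -/
import Mathlib

section
/- Let ξ : ℝ → ℝ be continuously differentiable with ξ and ξ′ bounded, and let ψ be the flow of ξ∂_x. Then there exists a constant c ≥ 0, depending only on sup_{x∈ℝ}|ξ′(x)|, such that for every measurable square-integrable f : ℝ → ℝ and every t ∈ ℝ, the function x ↦ f(ψ(t,x)) is square-integrable and ∫_ℝ f(ψ(t,x))² dx ≤ e^{2c|t|} ∫_ℝ f(x)² dx; i.e. the composition operator U_t^ξ f := f∘ψ(t,·) is bounded on L²(ℝ) with ‖U_t^ξ‖ ≤ e^{c|t|}. -/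
open MeasureTheory Set
open scoped ENNReal NNReal

/-- The composition operator `U_t^ξ f := f∘ψ(t,·)` along the flow of `ξ∂ₓ` is
bounded on `L²(ℝ)` with norm at most `e^{c|t|}`. -/
theorem composition_operator_L2_bound (ξ : ℝ → ℝ) (ψ : ℝ → ℝ → ℝ)
    (hξ : ContDiff ℝ 1 ξ)
    (hξb : ∃ M, ∀ x, |ξ x| ≤ M) (hξ'b : ∃ M, ∀ x, |deriv ξ x| ≤ M)
    (hψ0 : ∀ x : ℝ, ψ 0 x = x)
    (hψ : ∀ (t x : ℝ), HasDerivAt (fun s => ψ s x) (ξ (ψ t x)) t) :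
    ∃ c : ℝ, 0 ≤ c ∧
      ∀ f : ℝ → ℝ, Measurable f → Integrable (fun x => (f x) ^ 2) →
        ∀ t : ℝ,
          Integrable (fun x => (f (ψ t x)) ^ 2) ∧
          ∫ x : ℝ, (f (ψ t x)) ^ 2
            ≤ Real.exp (2 * c * |t|) * ∫ x : ℝ, (f x) ^ 2 := by
  classical
  obtain ⟨M, hM⟩ := hξ'b
  set c : ℝ := max M 0 with hcdef
  have hc0 : (0 : ℝ) ≤ c := le_max_right _ _
  refine ⟨c, hc0, ?_⟩
  have hdiff : Differentiable ℝ ξ := hξ.differentiable one_ne_zero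
  -- ξ is Lipschitz with constant c
  have hlip : LipschitzWith c.toNNReal ξ := by
    apply lipschitzWith_of_nnnorm_deriv_le hdiff
    intro x
    have h1 : ‖deriv ξ x‖ ≤ c :=
      le_trans (by rw [Real.norm_eq_abs]; exact hM x) (le_max_left _ _)
    rw [← NNReal.coe_le_coe, coe_nnnorm, Real.coe_toNNReal _ hc0]
    exact h1
  have hlipneg : LipschitzWith c.toNNReal (fun y => -ξ y) := by
    intro x y
    simpa [edist_neg_neg] using hlip x y
  -- continuity of each trajectory
  have hcont : ∀ x : ℝ, Continuous fun s => ψ s x := fun x =>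
    continuous_iff_continuousAt.2 fun s => (hψ s x).continuousAt
  -- group law: ψ (u + t) x = ψ u (ψ t x)
  have key : ∀ (t x u : ℝ), ψ (u + t) x = ψ u (ψ t x) := by
    intro t x u
    have hf' : ∀ s : ℝ, HasDerivAt (fun s => ψ (s + t) x) (ξ (ψ (s + t) x)) s := by
      intro s
      have h1 := (hψ (s + t) x).comp s ((hasDerivAt_id s).add_const t)
      simpa [Function.comp_def] using h1
    have hmem : (0 : ℝ) ∈ Ioo (min u 0 - 1) (max u 0 + 1) :=
      ⟨by have := min_le_right u 0; linarith, by have := le_max_right u 0; linarith⟩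
    have hEq := ODE_solution_unique_of_mem_Icc
      (v := fun _ y => ξ y) (s := fun _ => (univ : Set ℝ)) (K := c.toNNReal)
      (fun _ _ => hlip.lipschitzOnWith)
      (f := fun s => ψ (s + t) x) (g := fun s => ψ s (ψ t x))
      (t₀ := 0) (a := min u 0 - 1) (b := max u 0 + 1)
      hmem
      (((hcont x).comp (continuous_id.add continuous_const)).continuousOn)
      (fun s _ => hf' s) (fun _ _ => mem_univ _)
      ((hcont (ψ t x)).continuousOn)
      (fun s _ => hψ s (ψ t x)) (fun _ _ => mem_univ _)
      (by simp [hψ0])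
    have hu : u ∈ Icc (min u 0 - 1) (max u 0 + 1) :=
      ⟨by linarith [min_le_left u 0], by linarith [le_max_left u 0]⟩
    exact hEq hu
  have hinv : ∀ (t x : ℝ), ψ (-t) (ψ t x) = x := by
    intro t x
    have := key t x (-t)
    rw [neg_add_cancel, hψ0] at this
    exact this.symm
  -- Grönwall: distance bound
  have hdist : ∀ (t x y : ℝ), dist (ψ t x) (ψ t y) ≤ dist x y * Real.exp (c * |t|) := by
    intro t x y
    rcases le_or_gt 0 t with ht | ht
    · have h := dist_le_of_trajectories_ODE (v := fun _ y => ξ y) (K := c.toNNReal)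
        (f := fun s => ψ s x) (g := fun s => ψ s y) (a := 0) (b := t) (δ := dist x y)
        (fun _ => hlip)
        ((hcont x).continuousOn)
        (fun s _ => (hψ s x).hasDerivWithinAt)
        ((hcont y).continuousOn)
        (fun s _ => (hψ s y).hasDerivWithinAt)
        (by simp [hψ0])
      have h2 := h t ⟨ht, le_rfl⟩
      simpa [abs_of_nonneg ht, Real.coe_toNNReal _ hc0] using h2
    · -- t < 0 : reverse time
      have hf' : ∀ (z s : ℝ), HasDerivAt (fun s => ψ (-s) z) (-ξ (ψ (-s) z)) s := by
        intro z s
        have h1 := (hψ (-s) z).comp s (hasDerivAt_neg s)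
        simpa [mul_comm, Function.comp_def] using h1
      have h := dist_le_of_trajectories_ODE (v := fun _ y => -ξ y) (K := c.toNNReal)
        (f := fun s => ψ (-s) x) (g := fun s => ψ (-s) y) (a := 0) (b := -t) (δ := dist x y)
        (fun _ => hlipneg)
        (((hcont x).comp continuous_neg).continuousOn)
        (fun s _ => (hf' x s).hasDerivWithinAt)
        (((hcont y).comp continuous_neg).continuousOn)
        (fun s _ => (hf' y s).hasDerivWithinAt)
        (by simp [hψ0])
      have h2 := h (-t) ⟨by linarith, le_rfl⟩
      simp only [neg_neg, sub_zero] at h2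
      have habs : |t| = -t := abs_of_neg ht
      calc dist (ψ t x) (ψ t y) ≤ dist x y * Real.exp ((c.toNNReal : ℝ) * (-t)) := h2
        _ = dist x y * Real.exp (c * |t|) := by
            rw [Real.coe_toNNReal _ hc0, habs]
  -- ψ t is Lipschitz
  have hLip : ∀ t : ℝ, LipschitzWith (Real.exp (c * |t|)).toNNReal (ψ t) := by
    intro t
    apply LipschitzWith.of_dist_le_mul
    intro x y
    rw [Real.coe_toNNReal _ (Real.exp_pos _).le]
    calc dist (ψ t x) (ψ t y) ≤ dist x y * Real.exp (c * |t|) := hdist t x y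
      _ = Real.exp (c * |t|) * dist x y := mul_comm _ _
  have hmeasψ : ∀ t : ℝ, Measurable (ψ t) := fun t => (hLip t).continuous.measurable
  -- preimage under ψ t equals image under ψ (-t)
  have hpre : ∀ (t : ℝ) (s : Set ℝ), ψ t ⁻¹' s = ψ (-t) '' s := by
    intro t s
    ext x
    constructor
    · intro hx
      exact ⟨ψ t x, hx, hinv t x⟩
    · rintro ⟨y, hy, rfl⟩
      have h1 : ψ t (ψ (-t) y) = y := by
        have := hinv (-t) y
        rwa [neg_neg] at this
      show ψ t (ψ (-t) y) ∈ s
      rwa [h1]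
  -- measure bound for images under ψ
  have himg : ∀ (t : ℝ) (s : Set ℝ),
      volume (ψ t '' s) ≤ ENNReal.ofReal (Real.exp (c * |t|)) * volume s := by
    intro t s
    have h := (hLip t).hausdorffMeasure_image_le (zero_le_one) s
    rw [MeasureTheory.hausdorffMeasure_real] at h
    calc volume (ψ t '' s)
        ≤ ((Real.exp (c * |t|)).toNNReal : ℝ≥0∞) ^ (1 : ℝ) * volume s := h
      _ = ENNReal.ofReal (Real.exp (c * |t|)) * volume s := by
          rw [ENNReal.rpow_one, ENNReal.ofReal]
  -- pushforward bound
  have hmap : ∀ t : ℝ, Measure.map (ψ t) (volume : Measure ℝ)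
      ≤ ENNReal.ofReal (Real.exp (c * |t|)) • (volume : Measure ℝ) := by
    intro t
    rw [Measure.le_iff]
    intro s hs
    rw [Measure.map_apply (hmeasψ t) hs, hpre t s]
    calc volume (ψ (-t) '' s) ≤ ENNReal.ofReal (Real.exp (c * (abs (-t)))) * volume s :=
          himg (-t) s
      _ = ENNReal.ofReal (Real.exp (c * |t|)) * volume s := by rw [abs_neg]
      _ = (ENNReal.ofReal (Real.exp (c * |t|)) • (volume : Measure ℝ)) s := by
          simp [Measure.smul_apply, smul_eq_mul]
  -- main part
  intro f hf hint t
  set L : ℝ≥0∞ := ENNReal.ofReal (Real.exp (c * |t|)) with hLdef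
  have hgmeas : Measurable fun y : ℝ => ENNReal.ofReal ((f y) ^ 2) :=
    (hf.pow_const 2).ennreal_ofReal
  have hlin : (∫⁻ x, ENNReal.ofReal ((f (ψ t x)) ^ 2))
      ≤ L * ∫⁻ x, ENNReal.ofReal ((f x) ^ 2) := by
    have h1 : (∫⁻ x, ENNReal.ofReal ((f (ψ t x)) ^ 2))
        = ∫⁻ y, ENNReal.ofReal ((f y) ^ 2) ∂(Measure.map (ψ t) volume) :=
      (lintegral_map hgmeas (hmeasψ t)).symm
    rw [h1]
    calc (∫⁻ y, ENNReal.ofReal ((f y) ^ 2) ∂(Measure.map (ψ t) volume))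
        ≤ ∫⁻ y, ENNReal.ofReal ((f y) ^ 2) ∂(L • volume) :=
          lintegral_mono' (hmap t) le_rfl
      _ = L * ∫⁻ y, ENNReal.ofReal ((f y) ^ 2) := lintegral_smul_measure _ _
  have hnonneg : ∀ g : ℝ → ℝ, (0 : ℝ → ℝ) ≤ᵐ[volume] fun x => (g x) ^ 2 :=
    fun g => Filter.Eventually.of_forall fun x => sq_nonneg _
  have hfin : (∫⁻ x, ENNReal.ofReal ((f x) ^ 2)) < ⊤ := by
    have := hint.hasFiniteIntegral
    rwa [hasFiniteIntegral_iff_ofReal (hnonneg f)] at this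
  have hLfin : L ≠ ⊤ := ENNReal.ofReal_ne_top
  have hfincomp : (∫⁻ x, ENNReal.ofReal ((f (ψ t x)) ^ 2)) < ⊤ :=
    lt_of_le_of_lt hlin (ENNReal.mul_lt_top hLfin.lt_top hfin)
  have hmeascomp : Measurable fun x => (f (ψ t x)) ^ 2 :=
    (hf.comp (hmeasψ t)).pow_const 2
  have hintcomp : Integrable (fun x => (f (ψ t x)) ^ 2) := by
    refine ⟨hmeascomp.aestronglyMeasurable, ?_⟩
    rw [hasFiniteIntegral_iff_ofReal (hnonneg fun x => f (ψ t x))]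
    exact hfincomp
  refine ⟨hintcomp, ?_⟩
  have heq1 : ∫ x : ℝ, (f (ψ t x)) ^ 2
      = (∫⁻ x, ENNReal.ofReal ((f (ψ t x)) ^ 2)).toReal :=
    integral_eq_lintegral_of_nonneg_ae (hnonneg fun x => f (ψ t x))
      hmeascomp.aestronglyMeasurable
  have heq2 : ∫ x : ℝ, (f x) ^ 2 = (∫⁻ x, ENNReal.ofReal ((f x) ^ 2)).toReal :=
    integral_eq_lintegral_of_nonneg_ae (hnonneg f) (hf.pow_const 2).aestronglyMeasurable
  rw [heq1, heq2]
  have hstep : ((∫⁻ x, ENNReal.ofReal ((f (ψ t x)) ^ 2)).toReal)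
      ≤ (L * ∫⁻ x, ENNReal.ofReal ((f x) ^ 2)).toReal :=
    ENNReal.toReal_mono (ENNReal.mul_ne_top hLfin hfin.ne) hlin
  refine le_trans hstep ?_
  rw [ENNReal.toReal_mul, hLdef, ENNReal.toReal_ofReal (Real.exp_pos _).le]
  have hexp : Real.exp (c * |t|) ≤ Real.exp (2 * c * |t|) := by
    apply Real.exp_le_exp.2
    nlinarith [abs_nonneg t]
  exact mul_le_mul_of_nonneg_right hexp ENNReal.toReal_nonneg
end

section
/- Let ξ : ℝ → ℝ be twice continuously differentiable with ξ, ξ′, ξ″ bounded, and let ψ be the flow of ξ∂_x. Then there exists a constant C ≥ 0, depending only on sup|ξ′|, such that for every differentiable f : ℝ → ℝ with f and f′ square-integrable and every t ∈ ℝ, the function x ↦ f(ψ(t,x)) is differentiable with square-integrable value and derivative, and ∫_ℝ f(ψ(t,x))² dx + ∫_ℝ (∂_x[f(ψ(t,x))])² dx ≤ e^{C|t|} ( ∫_ℝ f(x)² dx + ∫_ℝ f′(x)² dx ); i.e. the composition operator f ↦ f∘ψ(t,·) is bounded on H¹(ℝ) with norm at most e^{C|t|/2}. -/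
open MeasureTheory Set

namespace CompH1

lemma abs_sub_le_of_deriv_bound {g : ℝ → ℝ} (hg : Differentiable ℝ g) {M : ℝ}
    (hM : ∀ x, |deriv g x| ≤ M) (a b : ℝ) : |g b - g a| ≤ M * |b - a| := by
  have := Convex.norm_image_sub_le_of_norm_deriv_le (𝕜 := ℝ) (f := g) (s := Set.univ)
    (fun x _ => hg x) (fun x _ => by simpa [Real.norm_eq_abs] using hM x)
    convex_univ (Set.mem_univ a) (Set.mem_univ b)
  simpa [Real.norm_eq_abs] using this

lemma taylor_bound {ξ : ℝ → ℝ} (hξ : ContDiff ℝ 2 ξ) {M₂ : ℝ}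
    (hM₂ : ∀ x, |deriv (deriv ξ) x| ≤ M₂) (a b : ℝ) :
    |ξ b - ξ a - deriv ξ a * (b - a)| ≤ M₂ * (b - a) ^ 2 := by
  have hξd : Differentiable ℝ ξ := hξ.differentiable two_ne_zero
  have hξ'1 : ContDiff ℝ 1 (deriv ξ) := by
    have h2 : ContDiff ℝ (1 + 1 : ℕ) ξ := by exact_mod_cast hξ
    exact (contDiff_succ_iff_deriv.mp h2).2.2
  have hξ'd : Differentiable ℝ (deriv ξ) := hξ'1.differentiable one_ne_zero
  have hlip : ∀ z w : ℝ, |deriv ξ z - deriv ξ w| ≤ M₂ * |z - w| := fun z w =>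
    abs_sub_le_of_deriv_bound hξ'd hM₂ w z
  have key : ∀ z ∈ Set.uIcc a b,
      HasDerivWithinAt (fun z => ξ z - deriv ξ a * z) (deriv ξ z - deriv ξ a) (Set.uIcc a b) z := by
    intro z _
    have h1 : HasDerivAt (fun w => deriv ξ a * w) (deriv ξ a) z := by
      simpa using (hasDerivAt_id z).const_mul (deriv ξ a)
    exact (((hξd z).hasDerivAt).sub h1).hasDerivWithinAt
  have hbound : ∀ z ∈ Set.uIcc a b, ‖deriv ξ z - deriv ξ a‖ ≤ M₂ * |b - a| := by
    intro z hz
    have h1 : |z - a| ≤ |b - a| := by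
      rcases Set.mem_uIcc.mp hz with h | h
      · rw [abs_of_nonneg (by linarith [h.1] : (0:ℝ) ≤ z - a)]
        linarith [le_abs_self (b - a), h.2]
      · rw [abs_of_nonpos (by linarith [h.2] : z - a ≤ 0)]
        linarith [neg_abs_le (b - a), h.1]
    have hM₂0 : 0 ≤ M₂ := (abs_nonneg _).trans (hM₂ 0)
    calc ‖deriv ξ z - deriv ξ a‖ = |deriv ξ z - deriv ξ a| := Real.norm_eq_abs _
      _ ≤ M₂ * |z - a| := hlip z a
      _ ≤ M₂ * |b - a| := by nlinarith
  have := Convex.norm_image_sub_le_of_norm_hasDerivWithin_le key hbound (convex_uIcc a b)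
    (Set.left_mem_uIcc (a := a) (b := b)) (Set.right_mem_uIcc (a := a) (b := b))
  have h2 : (ξ b - deriv ξ a * b) - (ξ a - deriv ξ a * a) = ξ b - ξ a - deriv ξ a * (b - a) := by ring
  rw [Real.norm_eq_abs, Real.norm_eq_abs, h2] at this
  calc |ξ b - ξ a - deriv ξ a * (b - a)| ≤ M₂ * |b - a| * |b - a| := this
    _ = M₂ * (b - a) ^ 2 := by rw [mul_assoc, abs_mul_abs_self]; ring

lemma gronwallBound_le_aux {M ε t : ℝ} (hM : 0 ≤ M) (hε : 0 ≤ ε) (ht : 0 ≤ t) :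
    gronwallBound 0 M ε t ≤ ε * t * Real.exp (M * t) := by
  rcases eq_or_lt_of_le hM with h | h
  · rw [← h]
    rw [show gronwallBound 0 0 ε t = 0 + ε * t from congrFun (gronwallBound_K0 0 ε) t]
    have : (1:ℝ) ≤ Real.exp (0 * t) := by simp
    nlinarith [mul_nonneg hε ht]
  · rw [show gronwallBound 0 M ε t = 0 * Real.exp (M*t) + ε / M * (Real.exp (M*t) - 1) from
      congrFun (gronwallBound_of_K_ne_0 (ne_of_gt h)) t]
    have hE : (0:ℝ) < Real.exp (M * t) := Real.exp_pos _
    have ha := Real.add_one_le_exp (-(M * t))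
    rw [Real.exp_neg] at ha
    have h1 : Real.exp (M*t) - 1 ≤ M * t * Real.exp (M*t) := by
      nlinarith [mul_le_mul_of_nonneg_left ha hE.le, mul_inv_cancel₀ (ne_of_gt hE)]
    have h2 : ε / M * (Real.exp (M*t) - 1) ≤ ε / M * (M * t * Real.exp (M*t)) :=
      mul_le_mul_of_nonneg_left h1 (div_nonneg hε h.le)
    have h3 : ε / M * (M * t * Real.exp (M*t)) = ε * t * Real.exp (M*t) := by
      field_simp
    linarith


lemma flow_group (ξ : ℝ → ℝ) (ψ : ℝ → ℝ → ℝ) {K : NNReal} (hlip : LipschitzWith K ξ)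
    (hψ0 : ∀ x, ψ 0 x = x) (hψ : ∀ t x, HasDerivAt (fun s => ψ s x) (ξ (ψ t x)) t)
    (σ t x : ℝ) : ψ σ (ψ t x) = ψ (σ + t) x := by
  have hf' : ∀ u : ℝ, HasDerivAt (fun s => ψ s (ψ t x)) (ξ (ψ u (ψ t x))) u := fun u => hψ u _
  have hg' : ∀ u : ℝ, HasDerivAt (fun s => ψ (s + t) x) (ξ (ψ (u + t) x)) u := by
    intro u
    have h := (hψ (u + t) x).comp u ((hasDerivAt_id u).add_const t)
    rw [mul_one] at h
    exact h
  have hcf : Continuous fun s => ψ s (ψ t x) :=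
    Differentiable.continuous (fun u => (hf' u).differentiableAt)
  have hcg : Continuous fun s => ψ (s + t) x :=
    Differentiable.continuous (fun u => (hg' u).differentiableAt)
  have h0 : (0:ℝ) ∈ Set.Ioo (-(|σ|+1)) (|σ|+1) := by
    constructor <;> [nlinarith [abs_nonneg σ]; nlinarith [abs_nonneg σ]]
  have huniq := ODE_solution_unique_of_mem_Icc (v := fun _ z => ξ z) (s := fun _ => Set.univ)
    (fun _ _ => hlip.lipschitzOnWith) h0 hcf.continuousOn
    (fun u _ => hf' u) (fun _ _ => trivial) hcg.continuousOn
    (fun u _ => hg' u) (fun _ _ => trivial)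
    (by simp [hψ0])
  have hmem : σ ∈ Set.Icc (-(|σ|+1)) (|σ|+1) := by
    constructor <;> [linarith [neg_abs_le σ]; linarith [le_abs_self σ]]
  exact huniq hmem

lemma flow_lip (ξ : ℝ → ℝ) (ψ : ℝ → ℝ → ℝ) {K : NNReal} (hlip : LipschitzWith K ξ)
    (hψ0 : ∀ x, ψ 0 x = x) (hψ : ∀ t x, HasDerivAt (fun s => ψ s x) (ξ (ψ t x)) t)
    {t : ℝ} (ht : 0 ≤ t) (x y : ℝ) :
    |ψ t y - ψ t x| ≤ Real.exp ((K : ℝ) * t) * |y - x| := by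
  have h := dist_le_of_trajectories_ODE (v := fun _ z => ξ z) (a := 0) (b := t)
    (f := fun s => ψ s y) (g := fun s => ψ s x) (δ := dist y x)
    (fun _ => hlip)
    (Differentiable.continuous (fun u => (hψ u y).differentiableAt)).continuousOn
    (fun u _ => (hψ u y).hasDerivWithinAt)
    (Differentiable.continuous (fun u => (hψ u x).differentiableAt)).continuousOn
    (fun u _ => (hψ u x).hasDerivWithinAt)
    (by show dist (ψ 0 y) (ψ 0 x) ≤ dist y x; rw [hψ0 y, hψ0 x])
    t (Set.right_mem_Icc.mpr ht)
  rw [Real.dist_eq, Real.dist_eq] at h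
  calc |ψ t y - ψ t x| ≤ |y - x| * Real.exp ((K:ℝ) * (t - 0)) := h
    _ = Real.exp ((K:ℝ) * t) * |y - x| := by rw [sub_zero]; ring


lemma flow_hasDerivAt (ξ : ℝ → ℝ) (ψ : ℝ → ℝ → ℝ) (hξ : ContDiff ℝ 2 ξ)
    {M M₂ : ℝ} (hM : ∀ x, |deriv ξ x| ≤ M) (hM₂ : ∀ x, |deriv (deriv ξ) x| ≤ M₂)
    (hψ0 : ∀ x, ψ 0 x = x) (hψ : ∀ t x, HasDerivAt (fun s => ψ s x) (ξ (ψ t x)) t)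
    {t : ℝ} (ht : 0 ≤ t) (x : ℝ) :
    ∃ w, HasDerivAt (fun y => ψ t y) w x ∧
      Real.exp (-(M * t)) ≤ w ∧ w ≤ Real.exp (M * t) := by
  have hM0 : 0 ≤ M := (abs_nonneg _).trans (hM 0)
  have hM₂0 : 0 ≤ M₂ := (abs_nonneg _).trans (hM₂ 0)
  have hξd : Differentiable ℝ ξ := hξ.differentiable two_ne_zero
  set K : NNReal := ⟨M, hM0⟩ with hKdef
  have hlip : LipschitzWith K ξ := lipschitzWith_of_nnnorm_deriv_le hξd fun z => by
    rw [← NNReal.coe_le_coe, coe_nnnorm, Real.norm_eq_abs]; exact hM z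
  have hKcoe : (K : ℝ) = M := rfl
  -- the candidate derivative
  have hcψ : ∀ z, Continuous fun s => ψ s z := fun z =>
    Differentiable.continuous (fun s => (hψ s z).differentiableAt)
  have hgc : Continuous fun s => deriv ξ (ψ s x) :=
    (hξ.continuous_deriv one_le_two).comp (hcψ x)
  set W : ℝ → ℝ := fun s => Real.exp (∫ u in (0:ℝ)..s, deriv ξ (ψ u x)) with hWdef
  have hWd : ∀ s, HasDerivAt W (deriv ξ (ψ s x) * W s) s := by
    intro s
    have h1 : HasDerivAt (fun r => ∫ u in (0:ℝ)..r, deriv ξ (ψ u x)) (deriv ξ (ψ s x)) s :=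
      intervalIntegral.integral_hasDerivAt_right (hgc.intervalIntegrable _ _)
        hgc.aestronglyMeasurable.stronglyMeasurableAtFilter hgc.continuousAt
    simpa [hWdef, mul_comm] using h1.exp
  have hW0 : W 0 = 1 := by simp [hWdef]
  have hWpos : ∀ s, 0 < W s := fun s => Real.exp_pos _
  have hIb : |∫ u in (0:ℝ)..t, deriv ξ (ψ u x)| ≤ M * t := by
    have := intervalIntegral.norm_integral_le_of_norm_le_const
      (C := M) (f := fun u => deriv ξ (ψ u x)) (a := (0:ℝ)) (b := t)
      (fun u _ => by rw [Real.norm_eq_abs]; exact hM _)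
    rwa [Real.norm_eq_abs, sub_zero, abs_of_nonneg ht] at this
  have hWub : W t ≤ Real.exp (M * t) :=
    Real.exp_le_exp.mpr (le_trans (le_abs_self _) hIb)
  have hWlb : Real.exp (-(M * t)) ≤ W t :=
    Real.exp_le_exp.mpr (by linarith [neg_abs_le (∫ u in (0:ℝ)..t, deriv ξ (ψ u x))])
  -- quadratic estimate
  set C₂ : ℝ := M₂ * Real.exp (M * t) ^ 2 * t * Real.exp (M * t) with hC₂def
  have hC₂0 : 0 ≤ C₂ := by positivity
  have key : ∀ y, |ψ t y - ψ t x - W t * (y - x)| ≤ C₂ * (y - x) ^ 2 := by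
    intro y
    set ε : ℝ := M₂ * (Real.exp (M * t) * |y - x|) ^ 2 with hεdef
    have hε0 : 0 ≤ ε := by positivity
    set u : ℝ → ℝ := fun s => ψ s y - ψ s x - W s * (y - x) with hudef
    set u' : ℝ → ℝ := fun s => deriv ξ (ψ s x) * u s +
      (ξ (ψ s y) - ξ (ψ s x) - deriv ξ (ψ s x) * (ψ s y - ψ s x)) with hu'def
    have hud : ∀ s, HasDerivAt u (u' s) s := by
      intro s
      have h := ((hψ s y).sub (hψ s x)).sub ((hWd s).mul_const (y - x))
      convert h using 1
      show deriv ξ (ψ s x) * (ψ s y - ψ s x - W s * (y - x)) + _ = _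
      ring
      all_goals rfl
    have hbound : ∀ s ∈ Set.Ico 0 t, ‖u' s‖ ≤ M * ‖u s‖ + ε := by
      intro s hs
      have hflip : |ψ s y - ψ s x| ≤ Real.exp (M * t) * |y - x| := by
        have h1 := flow_lip ξ ψ hlip hψ0 hψ hs.1 x y
        rw [hKcoe] at h1
        refine h1.trans ?_
        have := Real.exp_le_exp.mpr (mul_le_mul_of_nonneg_left hs.2.le hM0)
        nlinarith [abs_nonneg (y - x), Real.exp_pos (M * s)]
      have htay := taylor_bound hξ hM₂ (ψ s x) (ψ s y)
      have hR : |ξ (ψ s y) - ξ (ψ s x) - deriv ξ (ψ s x) * (ψ s y - ψ s x)| ≤ ε := by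
        refine htay.trans ?_
        rw [hεdef]
        have h2 : (ψ s y - ψ s x) ^ 2 ≤ (Real.exp (M * t) * |y - x|) ^ 2 := by
          rw [← sq_abs (ψ s y - ψ s x)]
          have h3 : (0:ℝ) ≤ |ψ s y - ψ s x| := abs_nonneg _
          nlinarith
        nlinarith
      rw [Real.norm_eq_abs, Real.norm_eq_abs, hu'def]
      calc |deriv ξ (ψ s x) * u s + (ξ (ψ s y) - ξ (ψ s x) - deriv ξ (ψ s x) * (ψ s y - ψ s x))|
          ≤ |deriv ξ (ψ s x) * u s| + |ξ (ψ s y) - ξ (ψ s x) - deriv ξ (ψ s x) * (ψ s y - ψ s x)| :=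
            abs_add_le _ _
        _ ≤ M * |u s| + ε := by
            rw [abs_mul]
            have := hM (ψ s x)
            have h4 : (0:ℝ) ≤ |u s| := abs_nonneg _
            nlinarith
    have hu0 : ‖u 0‖ ≤ 0 := by
      rw [Real.norm_eq_abs, hudef]
      simp [hψ0, hW0]
    have hgron := norm_le_gronwallBound_of_norm_deriv_right_le
      (f := u) (f' := u') (δ := 0) (K := M) (ε := ε) (a := 0) (b := t)
      (Differentiable.continuous (fun s => (hud s).differentiableAt)).continuousOn
      (fun s _ => (hud s).hasDerivWithinAt) hu0 hbound t (Set.right_mem_Icc.mpr ht)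
    rw [sub_zero] at hgron
    have h5 := gronwallBound_le_aux hM0 hε0 ht
    have h6 : ε * t * Real.exp (M * t) = C₂ * (y - x) ^ 2 := by
      rw [hεdef, hC₂def, mul_pow, sq_abs]; ring
    rw [Real.norm_eq_abs] at hgron
    calc |ψ t y - ψ t x - W t * (y - x)| = |u t| := rfl
      _ ≤ gronwallBound 0 M ε t := hgron
      _ ≤ ε * t * Real.exp (M * t) := h5
      _ = C₂ * (y - x) ^ 2 := h6
  refine ⟨W t, ?_, hWlb, hWub⟩
  rw [hasDerivAt_iff_isLittleO]
  have hbig : (fun y => ψ t y - ψ t x - (y - x) • W t) =O[nhds x] (fun y => (y - x) ^ 2) :=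
    Asymptotics.isBigO_of_le' (c := C₂) _ (fun y => by
      rw [Real.norm_eq_abs, Real.norm_eq_abs, smul_eq_mul, abs_of_nonneg (sq_nonneg (y - x))]
      calc |ψ t y - ψ t x - (y - x) * W t| = |ψ t y - ψ t x - W t * (y - x)| := by ring_nf
        _ ≤ C₂ * (y - x) ^ 2 := key y)
  have hsmall : (fun y : ℝ => (y - x) ^ 2) =o[nhds x] (fun y => y - x) := by
    have h1 : (fun y : ℝ => y - x) =o[nhds x] (fun _ => (1:ℝ)) := by
      rw [Asymptotics.isLittleO_one_iff]
      have : Filter.Tendsto (fun y : ℝ => y - x) (nhds x) (nhds (x - x)) :=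
        (continuous_id.sub continuous_const).tendsto x
      simpa using this
    have h2 := (Asymptotics.isBigO_refl (fun y : ℝ => y - x) (nhds x)).mul_isLittleO h1
    simpa [pow_two] using h2
  exact hbig.trans_isLittleO hsmall


lemma master (ξ : ℝ → ℝ) (ψ : ℝ → ℝ → ℝ) (hξ : ContDiff ℝ 2 ξ)
    {M M₂ : ℝ} (hM : ∀ x, |deriv ξ x| ≤ M) (hM₂ : ∀ x, |deriv (deriv ξ) x| ≤ M₂)
    (hψ0 : ∀ x, ψ 0 x = x) (hψ : ∀ t x, HasDerivAt (fun s => ψ s x) (ξ (ψ t x)) t)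
    (f : ℝ → ℝ) (hf : Differentiable ℝ f)
    (hf2 : Integrable (fun x => (f x) ^ 2)) (hf'2 : Integrable (fun x => (deriv f x) ^ 2))
    {t : ℝ} (ht : 0 ≤ t) :
    Differentiable ℝ (fun x => f (ψ t x)) ∧
    Integrable (fun x => (f (ψ t x)) ^ 2) ∧
    Integrable (fun x => (deriv (fun y => f (ψ t y)) x) ^ 2) ∧
    (∫ x : ℝ, (f (ψ t x)) ^ 2) + (∫ x : ℝ, (deriv (fun y => f (ψ t y)) x) ^ 2)
      ≤ Real.exp (M * t) * ((∫ x : ℝ, (f x) ^ 2) + (∫ x : ℝ, (deriv f x) ^ 2)) := by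
  have hM0 : 0 ≤ M := (abs_nonneg _).trans (hM 0)
  have hξd : Differentiable ℝ ξ := hξ.differentiable two_ne_zero
  set K : NNReal := ⟨M, hM0⟩ with hKdef
  have hlip : LipschitzWith K ξ := lipschitzWith_of_nnnorm_deriv_le hξd fun z => by
    rw [← NNReal.coe_le_coe, coe_nnnorm, Real.norm_eq_abs]; exact hM z
  have hgroup : ∀ σ τ z, ψ σ (ψ τ z) = ψ (σ + τ) z := flow_group ξ ψ hlip hψ0 hψ
  have hinj : Function.Injective (fun y => ψ t y) := by
    intro a b hab
    have ha : ψ (-t) (ψ t a) = a := by rw [hgroup]; simp [hψ0]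
    have hb : ψ (-t) (ψ t b) = b := by rw [hgroup]; simp [hψ0]
    simp only at hab
    rw [← ha, ← hb, hab]
  have hsurj : Function.Surjective (fun y => ψ t y) := fun z =>
    ⟨ψ (-t) z, by simp only; rw [hgroup]; simp [hψ0]⟩
  have hW := fun z => flow_hasDerivAt ξ ψ hξ hM hM₂ hψ0 hψ ht z
  set w : ℝ → ℝ := fun z => deriv (fun y => ψ t y) z with hwdef
  have hwd : ∀ z, HasDerivAt (fun y => ψ t y) (w z) z := by
    intro z; obtain ⟨w₀, h, _, _⟩ := hW z
    have : w z = w₀ := h.deriv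
    rw [this]; exact h
  have hwlb : ∀ z, Real.exp (-(M * t)) ≤ w z := by
    intro z; obtain ⟨w₀, h, h1, _⟩ := hW z
    have : w z = w₀ := h.deriv
    rw [this]; exact h1
  have hwub : ∀ z, w z ≤ Real.exp (M * t) := by
    intro z; obtain ⟨w₀, h, _, h2⟩ := hW z
    have : w z = w₀ := h.deriv
    rw [this]; exact h2
  have hwpos : ∀ z, 0 < w z := fun z => lt_of_lt_of_le (Real.exp_pos _) (hwlb z)
  have hψdiff : Differentiable ℝ (fun y => ψ t y) := fun z => (hwd z).differentiableAt
  have hψc : Continuous (fun y => ψ t y) := hψdiff.continuous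
  have hψm : Measurable (fun y => ψ t y) := hψc.measurable
  have hwm : Measurable w := by rw [hwdef]; exact measurable_deriv _
  have himg : (fun y => ψ t y) '' Set.univ = Set.univ := by
    rw [Set.image_univ]; exact hsurj.range_eq
  have hderivwithin : ∀ z ∈ Set.univ, HasDerivWithinAt (fun y => ψ t y) (w z) Set.univ z :=
    fun z _ => (hwd z).hasDerivWithinAt
  have hCOV : ∀ g : ℝ → ℝ, Integrable g →
      Integrable (fun z => |w z| * g (ψ t z)) ∧ (∫ z, g z) = ∫ z, |w z| * g (ψ t z) := by
    intro g hg
    have h1 := integrableOn_image_iff_integrableOn_abs_deriv_smul MeasurableSet.univ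
      hderivwithin hinj.injOn g
    have h2 := integral_image_eq_integral_abs_deriv_smul MeasurableSet.univ
      hderivwithin hinj.injOn g
    rw [himg] at h1 h2
    simp only [smul_eq_mul, Measure.restrict_univ, integrableOn_univ] at h1 h2
    exact ⟨h1.mp hg, h2⟩
  set A : ℝ := Real.exp (M * t) with hAdef
  have hA1 : A * Real.exp (-(M * t)) = 1 := by rw [hAdef, ← Real.exp_add]; simp
  have hApos : 0 < A := Real.exp_pos _
  -- composition derivative
  have hcomp : ∀ z, HasDerivAt (fun y => f (ψ t y)) (deriv f (ψ t z) * w z) z := fun z =>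
    (hf (ψ t z)).hasDerivAt.comp z (hwd z)
  have hdiff : Differentiable ℝ (fun x => f (ψ t x)) := fun z => (hcomp z).differentiableAt
  have hderiv_eq : (fun x => (deriv (fun y => f (ψ t y)) x) ^ 2)
      = fun x => (deriv f (ψ t x)) ^ 2 * (w x) ^ 2 := by
    funext z; rw [(hcomp z).deriv]; ring
  obtain ⟨I1, E1⟩ := hCOV _ hf2
  obtain ⟨I2, E2⟩ := hCOV _ hf'2
  -- pointwise bounds
  have hone : ∀ z, (1:ℝ) ≤ A * w z := by
    intro z
    calc (1:ℝ) = A * Real.exp (-(M * t)) := hA1.symm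
      _ ≤ A * w z := mul_le_mul_of_nonneg_left (hwlb z) hApos.le
  have hpt1 : ∀ z, (f (ψ t z)) ^ 2 ≤ A * (|w z| * (f (ψ t z)) ^ 2) := by
    intro z
    rw [abs_of_pos (hwpos z)]
    nlinarith [hone z, sq_nonneg (f (ψ t z))]
  have hpt2 : ∀ z, (deriv f (ψ t z)) ^ 2 * (w z) ^ 2
      ≤ A * (|w z| * (deriv f (ψ t z)) ^ 2) := by
    intro z
    rw [abs_of_pos (hwpos z)]
    nlinarith [mul_nonneg (mul_nonneg (sub_nonneg.mpr (hwub z)) (hwpos z).le)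
      (sq_nonneg (deriv f (ψ t z)))]
  -- integrability
  have hint1 : Integrable (fun x => (f (ψ t x)) ^ 2) := by
    refine (I1.const_mul A).mono' ?_ ?_
    · exact ((hf.continuous.comp hψc).pow 2).aestronglyMeasurable
    · filter_upwards with z
      rw [Real.norm_eq_abs, abs_of_nonneg (sq_nonneg _)]
      exact hpt1 z
  have hint2' : Integrable (fun x => (deriv f (ψ t x)) ^ 2 * (w x) ^ 2) := by
    refine (I2.const_mul A).mono' ?_ ?_
    · exact (((((measurable_deriv f).comp hψm).pow_const 2).mul
        (hwm.pow_const 2))).aestronglyMeasurable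
    · filter_upwards with z
      rw [Real.norm_eq_abs, abs_of_nonneg (by positivity)]
      exact hpt2 z
  have hint2 : Integrable (fun x => (deriv (fun y => f (ψ t y)) x) ^ 2) := by
    rw [hderiv_eq]; exact hint2'
  -- integral bounds
  have hle1 : (∫ x : ℝ, (f (ψ t x)) ^ 2) ≤ A * ∫ x : ℝ, (f x) ^ 2 := by
    calc (∫ x : ℝ, (f (ψ t x)) ^ 2)
        ≤ ∫ x : ℝ, A * (|w x| * (f (ψ t x)) ^ 2) :=
          integral_mono hint1 (I1.const_mul A) (fun z => hpt1 z)
      _ = A * ∫ x : ℝ, |w x| * (f (ψ t x)) ^ 2 := integral_const_mul _ _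
      _ = A * ∫ x : ℝ, (f x) ^ 2 := by rw [← E1]
  have hle2 : (∫ x : ℝ, (deriv (fun y => f (ψ t y)) x) ^ 2) ≤ A * ∫ x : ℝ, (deriv f x) ^ 2 := by
    have hEq : (∫ x : ℝ, (deriv (fun y => f (ψ t y)) x) ^ 2)
        = ∫ x : ℝ, (deriv f (ψ t x)) ^ 2 * (w x) ^ 2 := by rw [hderiv_eq]
    rw [hEq]
    calc (∫ x : ℝ, (deriv f (ψ t x)) ^ 2 * (w x) ^ 2)
        ≤ ∫ x : ℝ, A * (|w x| * (deriv f (ψ t x)) ^ 2) :=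
          integral_mono hint2' (I2.const_mul A) (fun z => hpt2 z)
      _ = A * ∫ x : ℝ, |w x| * (deriv f (ψ t x)) ^ 2 := integral_const_mul _ _
      _ = A * ∫ x : ℝ, (deriv f x) ^ 2 := by rw [← E2]
  refine ⟨hdiff, hint1, hint2, ?_⟩
  rw [mul_add]
  exact add_le_add hle1 hle2

end CompH1

open MeasureTheory

/-- The composition operator `f ↦ f∘ψ(t,·)` along the flow of `ξ∂ₓ` is bounded
on `H¹(ℝ)` with norm at most `e^{C|t|/2}`. -/
theorem composition_operator_H1_bound (ξ : ℝ → ℝ) (ψ : ℝ → ℝ → ℝ)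
    (hξ : ContDiff ℝ 2 ξ)
    (hξb : ∃ M, ∀ x, |ξ x| ≤ M) (hξ'b : ∃ M, ∀ x, |deriv ξ x| ≤ M)
    (hξ''b : ∃ M, ∀ x, |deriv (deriv ξ) x| ≤ M)
    (hψ0 : ∀ x : ℝ, ψ 0 x = x)
    (hψ : ∀ (t x : ℝ), HasDerivAt (fun s => ψ s x) (ξ (ψ t x)) t) :
    ∃ C : ℝ, 0 ≤ C ∧
      ∀ f : ℝ → ℝ, Differentiable ℝ f →
        Integrable (fun x => (f x) ^ 2) →
        Integrable (fun x => (deriv f x) ^ 2) →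
        ∀ t : ℝ,
          Differentiable ℝ (fun x => f (ψ t x)) ∧
          Integrable (fun x => (f (ψ t x)) ^ 2) ∧
          Integrable (fun x => (deriv (fun y => f (ψ t y)) x) ^ 2) ∧
          (∫ x : ℝ, (f (ψ t x)) ^ 2)
              + (∫ x : ℝ, (deriv (fun y => f (ψ t y)) x) ^ 2)
            ≤ Real.exp (C * |t|)
              * ((∫ x : ℝ, (f x) ^ 2) + (∫ x : ℝ, (deriv f x) ^ 2)) := by
  obtain ⟨M, hM⟩ := hξ'b
  obtain ⟨M₂, hM₂⟩ := hξ''b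
  have hM0 : 0 ≤ M := (abs_nonneg _).trans (hM 0)
  refine ⟨M, hM0, ?_⟩
  intro f hf hf2 hf'2 t
  rcases le_or_gt 0 t with ht | ht
  · have h := CompH1.master ξ ψ hξ hM hM₂ hψ0 hψ f hf hf2 hf'2 ht
    rwa [abs_of_nonneg ht]
  · -- time reversal
    set ξ₂ : ℝ → ℝ := fun x => -ξ x with hξ₂def
    set ψ₂ : ℝ → ℝ → ℝ := fun s x => ψ (-s) x with hψ₂def
    have hξ₂ : ContDiff ℝ 2 ξ₂ := hξ.neg
    have hd1 : deriv ξ₂ = fun x => -deriv ξ x := funext fun x => deriv.neg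
    have hM' : ∀ x, |deriv ξ₂ x| ≤ M := by
      intro x; rw [hd1]; simpa [abs_neg] using hM x
    have hM₂' : ∀ x, |deriv (deriv ξ₂) x| ≤ M₂ := by
      intro x; rw [hd1]
      have : deriv (fun x => -deriv ξ x) x = -deriv (deriv ξ) x := deriv.neg
      rw [this]; simpa [abs_neg] using hM₂ x
    have hψ₂0 : ∀ x, ψ₂ 0 x = x := by
      intro x; show ψ (-0) x = x; rw [neg_zero]; exact hψ0 x
    have hψ₂ : ∀ τ z, HasDerivAt (fun s => ψ₂ s z) (ξ₂ (ψ₂ τ z)) τ := by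
      intro τ z
      have h := (hψ (-τ) z).comp τ (hasDerivAt_neg τ)
      rw [mul_neg_one] at h
      exact h
    have hmt : (0:ℝ) ≤ -t := by linarith
    have h := CompH1.master ξ₂ ψ₂ hξ₂ hM' hM₂' hψ₂0 hψ₂ f hf hf2 hf'2 hmt
    have habs : |t| = -t := abs_of_neg ht
    simp only [hψ₂def, neg_neg] at h
    rwa [habs]
end

section
/- Let ξ : ℝ → ℝ be continuously differentiable with ξ and ξ′ bounded, and let ψ be the flow of ξ∂_x. Then for every measurable square-integrable f : ℝ → ℝ, ∫_ℝ (f(ψ(t,x)) − f(x))² dx → 0 as t → 0; i.e. the one-parameter group of composition operators U_t^ξ f := f∘ψ(t,·) is strongly continuous on L²(ℝ). -/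
open MeasureTheory Filter Topology

open scoped NNReal ENNReal
open Set Real

lemma flow_dist_le {v : ℝ → ℝ} {K : ℝ≥0} (hv : LipschitzWith K v)
    {φ : ℝ → ℝ → ℝ} (hφ : ∀ t x, HasDerivAt (fun s => φ s x) (v (φ t x)) t)
    (x y : ℝ) {t : ℝ} (ht : 0 ≤ t) :
    dist (φ t x) (φ t y) ≤ dist (φ 0 x) (φ 0 y) * Real.exp (K * t) := by
  have h := dist_le_of_trajectories_ODE (v := fun _ => v) (K := K) (fun _ => hv)
    (f := fun s => φ s x) (g := fun s => φ s y) (a := 0) (b := t)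
    (fun s _ => (hφ s x).continuousAt.continuousWithinAt)
    (fun s _ => (hφ s x).hasDerivWithinAt)
    (fun s _ => (hφ s y).continuousAt.continuousWithinAt)
    (fun s _ => (hφ s y).hasDerivWithinAt)
    le_rfl t ⟨ht, le_rfl⟩
  simpa using h

lemma flow_neg_deriv {ξ : ℝ → ℝ} {ψ : ℝ → ℝ → ℝ}
    (hψ : ∀ (t x : ℝ), HasDerivAt (fun s => ψ s x) (ξ (ψ t x)) t) (s x : ℝ) :
    HasDerivAt (fun u => ψ (-u) x) (-ξ (ψ (-s) x)) s := by
  have h := (hψ (-s) x).comp s (hasDerivAt_neg s)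
  simpa [Function.comp_def] using h

lemma flow_lipschitz {ξ : ℝ → ℝ} {K : ℝ≥0} (hv : LipschitzWith K ξ) {ψ : ℝ → ℝ → ℝ}
    (hψ0 : ∀ x : ℝ, ψ 0 x = x)
    (hψ : ∀ (t x : ℝ), HasDerivAt (fun s => ψ s x) (ξ (ψ t x)) t) (t x y : ℝ) :
    dist (ψ t x) (ψ t y) ≤ Real.exp (K * |t|) * dist x y := by
  rcases le_or_gt 0 t with h | h
  · have := flow_dist_le hv hψ x y h
    rw [abs_of_nonneg h]
    simpa [hψ0, mul_comm] using this
  · have := flow_dist_le (hv.neg) (φ := fun s x => ψ (-s) x)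
      (fun s x => flow_neg_deriv hψ s x) x y (t := -t) (by linarith)
    rw [abs_of_neg h]
    simpa [hψ0, mul_comm] using this

lemma flow_inverse {ξ : ℝ → ℝ} {K : ℝ≥0} (hv : LipschitzWith K ξ) {ψ : ℝ → ℝ → ℝ}
    (hψ0 : ∀ x : ℝ, ψ 0 x = x)
    (hψ : ∀ (t x : ℝ), HasDerivAt (fun s => ψ s x) (ξ (ψ t x)) t) (t x : ℝ) :
    ψ (-t) (ψ t x) = x := by
  have hd : ∀ s : ℝ, HasDerivAt (fun u => ψ (u - t) (ψ t x)) (ξ (ψ (s - t) (ψ t x))) s := by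
    intro s
    have h := (hψ (s - t) (ψ t x)).comp s ((hasDerivAt_id s).sub_const t)
    simpa [Function.comp_def] using h
  have key : EqOn (fun u => ψ (u - t) (ψ t x)) (fun s => ψ s x)
      (Icc (-(|t| + 1)) (|t| + 1)) := by
    apply ODE_solution_unique_of_mem_Icc (v := fun _ => ξ) (K := K)
      (fun _ _ => hv.lipschitzOnWith) (t₀ := t) (s := fun _ => univ)
    · constructor <;> nlinarith [abs_nonneg t, neg_abs_le t, le_abs_self t]
    · exact fun s _ => ((hd s).continuousAt).continuousWithinAt
    · exact fun s _ => hd s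
    · exact fun _ _ => trivial
    · exact fun s _ => (hψ s x).continuousAt.continuousWithinAt
    · exact fun s _ => hψ s x
    · exact fun _ _ => trivial
    · simp [hψ0]
  have h0 : (0 : ℝ) ∈ Icc (-(|t| + 1)) (|t| + 1) := by
    constructor <;> nlinarith [abs_nonneg t]
  simpa [hψ0] using key h0

lemma flow_displacement {ξ : ℝ → ℝ} {M : ℝ} (hb : ∀ x, |ξ x| ≤ M) {ψ : ℝ → ℝ → ℝ}
    (hψ0 : ∀ x : ℝ, ψ 0 x = x)
    (hψ : ∀ (t x : ℝ), HasDerivAt (fun s => ψ s x) (ξ (ψ t x)) t) (t x : ℝ) :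
    |ψ t x - x| ≤ M * |t| := by
  have hM : 0 ≤ M := le_trans (abs_nonneg _) (hb 0)
  have hlip : LipschitzWith M.toNNReal (fun s => ψ s x) := by
    apply lipschitzWith_of_nnnorm_deriv_le (fun s => (hψ s x).differentiableAt)
    intro s
    rw [(hψ s x).deriv]
    simpa [← NNReal.coe_le_coe, Real.norm_eq_abs, Real.coe_toNNReal _ hM] using hb (ψ s x)
  have := hlip.dist_le_mul t 0
  simpa [hψ0, Real.dist_eq, Real.coe_toNNReal _ hM] using this

lemma flow_continuous {ξ : ℝ → ℝ} {K : ℝ≥0} (hv : LipschitzWith K ξ) {ψ : ℝ → ℝ → ℝ}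
    (hψ0 : ∀ x : ℝ, ψ 0 x = x)
    (hψ : ∀ (t x : ℝ), HasDerivAt (fun s => ψ s x) (ξ (ψ t x)) t) (t : ℝ) :
    Continuous (ψ t) := by
  have : LipschitzWith (Real.exp (K * |t|)).toNNReal (ψ t) := by
    apply LipschitzWith.of_dist_le_mul
    intro x y
    simpa [Real.coe_toNNReal _ (Real.exp_nonneg _)] using flow_lipschitz hv hψ0 hψ t x y
  exact this.continuous

lemma flow_measure_bound {ξ : ℝ → ℝ} {K : ℝ≥0} (hv : LipschitzWith K ξ) {ψ : ℝ → ℝ → ℝ}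
    (hψ0 : ∀ x : ℝ, ψ 0 x = x)
    (hψ : ∀ (t x : ℝ), HasDerivAt (fun s => ψ s x) (ξ (ψ t x)) t) (t : ℝ) (s : Set ℝ) :
    volume (ψ t ⁻¹' s) ≤ ENNReal.ofReal (Real.exp (K * |t|)) * volume s := by
  have hpre : ψ t ⁻¹' s = ψ (-t) '' s := by
    ext z
    constructor
    · intro hz
      exact ⟨ψ t z, hz, flow_inverse hv hψ0 hψ t z⟩
    · rintro ⟨y, hy, rfl⟩
      have h2 := flow_inverse hv hψ0 hψ (-t) y
      rw [neg_neg] at h2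
      show ψ t (ψ (-t) y) ∈ s
      rw [h2]; exact hy
  rw [hpre]
  have hlip : LipschitzWith (Real.exp (K * |t|)).toNNReal (ψ (-t)) := by
    apply LipschitzWith.of_dist_le_mul
    intro x y
    simpa [Real.coe_toNNReal _ (Real.exp_nonneg _), abs_neg] using
      flow_lipschitz hv hψ0 hψ (-t) x y
  have h := hlip.hausdorffMeasure_image_le (d := 1) zero_le_one s
  rw [MeasureTheory.hausdorffMeasure_real] at h
  refine h.trans (le_of_eq ?_)
  congr 1
  rw [ENNReal.rpow_one, ENNReal.ofReal, Real.toNNReal]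

lemma flow_lintegral_bound {ξ : ℝ → ℝ} {K : ℝ≥0} (hv : LipschitzWith K ξ) {ψ : ℝ → ℝ → ℝ}
    (hψ0 : ∀ x : ℝ, ψ 0 x = x)
    (hψ : ∀ (t x : ℝ), HasDerivAt (fun s => ψ s x) (ξ (ψ t x)) t) (t : ℝ)
    {h : ℝ → ℝ≥0∞} (hm : Measurable h) :
    ∫⁻ x, h (ψ t x) ≤ ENNReal.ofReal (Real.exp (K * |t|)) * ∫⁻ x, h x := by
  have hc : Measurable (ψ t) := (flow_continuous hv hψ0 hψ t).measurable
  set c : ℝ≥0∞ := ENNReal.ofReal (Real.exp (K * |t|)) with hc_def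
  have hmap : Measure.map (ψ t) volume ≤ c • volume := by
    rw [Measure.le_iff]
    intro s hs
    rw [Measure.map_apply hc hs, Measure.smul_apply, smul_eq_mul]
    exact flow_measure_bound hv hψ0 hψ t s
  calc ∫⁻ x, h (ψ t x) = ∫⁻ y, h y ∂(Measure.map (ψ t) volume) := (lintegral_map hm hc).symm
    _ ≤ ∫⁻ y, h y ∂(c • volume) := lintegral_mono' hmap le_rfl
    _ = c * ∫⁻ y, h y := lintegral_smul_measure _ _

lemma ofReal_sq_bound (a b c d : ℝ) :
    ENNReal.ofReal ((a - b) ^ 2) ≤ 3 * ENNReal.ofReal ((a - c) ^ 2)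
      + 3 * ENNReal.ofReal ((c - d) ^ 2) + 3 * ENNReal.ofReal ((d - b) ^ 2) := by
  have h : (a - b) ^ 2 ≤ 3 * (a - c) ^ 2 + 3 * (c - d) ^ 2 + 3 * (d - b) ^ 2 := by nlinarith [sq_nonneg ((a-c)-(c-d)), sq_nonneg ((a-c)-(d-b)), sq_nonneg ((c-d)-(d-b))]
  calc ENNReal.ofReal ((a - b) ^ 2)
      ≤ ENNReal.ofReal (3 * (a - c) ^ 2 + 3 * (c - d) ^ 2 + 3 * (d - b) ^ 2) :=
        ENNReal.ofReal_le_ofReal h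
    _ = 3 * ENNReal.ofReal ((a - c) ^ 2) + 3 * ENNReal.ofReal ((c - d) ^ 2)
        + 3 * ENNReal.ofReal ((d - b) ^ 2) := by
        rw [ENNReal.ofReal_add (by positivity) (by positivity),
          ENNReal.ofReal_add (by positivity) (by positivity),
          ENNReal.ofReal_mul (by norm_num), ENNReal.ofReal_mul (by norm_num),
          ENNReal.ofReal_mul (by norm_num)]
        norm_num

/-- Strong continuity on `L²(ℝ)` of the group of composition operators
`U_t^ξ f := f∘ψ(t,·)` along the flow of `ξ∂ₓ`. -/
theorem composition_operator_strong_continuity (ξ : ℝ → ℝ) (ψ : ℝ → ℝ → ℝ)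
    (hξ : ContDiff ℝ 1 ξ)
    (hξb : ∃ M, ∀ x, |ξ x| ≤ M) (hξ'b : ∃ M, ∀ x, |deriv ξ x| ≤ M)
    (hψ0 : ∀ x : ℝ, ψ 0 x = x)
    (hψ : ∀ (t x : ℝ), HasDerivAt (fun s => ψ s x) (ξ (ψ t x)) t) :
    ∀ f : ℝ → ℝ, Measurable f → Integrable (fun x => (f x) ^ 2) →
      Tendsto (fun t : ℝ => ∫ x : ℝ, (f (ψ t x) - f x) ^ 2) (𝓝 0) (𝓝 0) := by
  intro f hf hf2
  obtain ⟨M₁, hM₁⟩ := hξb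
  obtain ⟨M₂, hM₂⟩ := hξ'b
  have hM₁0 : 0 ≤ M₁ := le_trans (abs_nonneg _) (hM₁ 0)
  have hM₂0 : 0 ≤ M₂ := le_trans (abs_nonneg _) (hM₂ 0)
  set K : ℝ≥0 := M₂.toNNReal with hK
  have hv : LipschitzWith K ξ := by
    apply lipschitzWith_of_nnnorm_deriv_le (hξ.differentiable one_ne_zero)
    intro x
    simpa [hK, ← NNReal.coe_le_coe, Real.norm_eq_abs, Real.coe_toNNReal _ hM₂0] using hM₂ x
  have hψt_meas : ∀ t, Measurable (ψ t) := fun t => (flow_continuous hv hψ0 hψ t).measurable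
  set J : ℝ → ℝ≥0∞ := fun t => ∫⁻ x, ENNReal.ofReal ((f (ψ t x) - f x) ^ 2) with hJdef
  have hint_meas : ∀ t, Measurable fun x => ENNReal.ofReal ((f (ψ t x) - f x) ^ 2) :=
    fun t => (((hf.comp (hψt_meas t)).sub hf).pow_const 2).ennreal_ofReal
  have heq : ∀ t, (∫ x : ℝ, (f (ψ t x) - f x) ^ 2) = (J t).toReal := by
    intro t
    have hm : AEStronglyMeasurable (fun x => (f (ψ t x) - f x) ^ 2) volume :=
      (((hf.comp (hψt_meas t)).sub hf).pow_const 2).aestronglyMeasurable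
    rw [integral_eq_lintegral_of_nonneg_ae (Eventually.of_forall fun x => sq_nonneg _) hm]
  suffices hJ0 : Tendsto J (𝓝 0) (𝓝 0) by
    have h := (ENNReal.tendsto_toReal ENNReal.zero_ne_top).comp hJ0
    simp only [Function.comp_def, ENNReal.toReal_zero] at h
    simpa only [heq] using h
  rw [ENNReal.tendsto_nhds_zero]
  intro ε hε
  set ε₀ : ℝ≥0∞ := min ε 1 with hε₀def
  have hε₀top : ε₀ ≠ ∞ := by
    simp [hε₀def]
  have hε₀pos : 0 < ε₀ := lt_min hε zero_lt_one
  set r : ℝ := ε₀.toReal with hrdef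
  have hrpos : 0 < r := ENNReal.toReal_pos hε₀pos.ne' hε₀top
  -- approximate f by a continuous compactly supported g
  have hfL2 : MemLp f 2 volume := (memLp_two_iff_integrable_sq hf.aestronglyMeasurable).2 hf2
  set δ : ℝ := r / (9 * (Real.exp K + 1)) with hδdef
  have hδpos : 0 < δ := by positivity
  have hfL2' : MemLp f (ENNReal.ofReal 2) volume := by
    rw [show ENNReal.ofReal 2 = 2 by norm_num]
    exact hfL2
  obtain ⟨g, hg_supp, hg_int, hg_cont, hg_mem⟩ :=
    hfL2'.exists_hasCompactSupport_integral_rpow_sub_le (by norm_num : (0:ℝ) < 2) hδpos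
  have hgL2 : MemLp g 2 volume := by
    rw [show ENNReal.ofReal 2 = 2 by norm_num] at hg_mem
    exact hg_mem
  have hgmeas : Measurable g := hg_cont.measurable
  set D : ℝ≥0∞ := ∫⁻ x, ENNReal.ofReal ((f x - g x) ^ 2) with hDdef
  have hDle : D ≤ ENNReal.ofReal δ := by
    have hint : Integrable (fun x => (f x - g x) ^ 2) volume := (hfL2.sub hgL2).integrable_sq
    rw [hDdef, ← ofReal_integral_eq_lintegral_ofReal hint
      (Eventually.of_forall fun x => sq_nonneg _)]
    apply ENNReal.ofReal_le_ofReal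
    calc ∫ x, (f x - g x) ^ 2 = ∫ x, ‖f x - g x‖ ^ (2:ℝ) := by
          apply integral_congr_ae
          filter_upwards with x
          rw [show (2:ℝ) = ((2:ℕ):ℝ) by norm_num, Real.rpow_natCast]
          simp [Real.norm_eq_abs, sq_abs]
      _ ≤ δ := hg_int
  -- bound and support radius for g
  obtain ⟨R, hR⟩ := hg_supp.isCompact.isBounded.subset_closedBall 0
  have hgz : ∀ y : ℝ, R < |y| → g y = 0 := by
    intro y hy
    apply image_eq_zero_of_notMem_tsupport
    intro hmem
    have := hR hmem
    rw [Real.closedBall_eq_Icc, Set.mem_Icc] at this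
    rcases abs_cases y with ⟨h1, _⟩ | ⟨h1, _⟩ <;> simp_all <;> linarith
  obtain ⟨B, hB⟩ : ∃ B : ℝ, ∀ y, |g y| ≤ B := by
    obtain ⟨B, hB⟩ := (hg_cont.norm.bddAbove_range_of_hasCompactSupport hg_supp.norm).exists_ge 0
    exact ⟨B, fun y => hB.2 _ ⟨y, rfl⟩⟩
  -- middle term tends to zero by dominated convergence
  set G : ℝ → ℝ≥0∞ := fun t => ∫⁻ x, ENNReal.ofReal ((g (ψ t x) - g x) ^ 2) with hGdef
  have hGlim : Tendsto G (𝓝 0) (𝓝 0) := by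
    have hdct := tendsto_lintegral_filter_of_dominated_convergence (μ := volume) (l := 𝓝 (0:ℝ))
      (F := fun t x => ENNReal.ofReal ((g (ψ t x) - g x) ^ 2)) (f := fun _ => 0)
      (bound := (Set.Icc (-(R + M₁)) (R + M₁)).indicator fun _ => ENNReal.ofReal (4 * B ^ 2))
      (Eventually.of_forall fun t =>
        (((hgmeas.comp (hψt_meas t)).sub hgmeas).pow_const 2).ennreal_ofReal)
      ?_ ?_ ?_
    · simpa using hdct
    · filter_upwards [Icc_mem_nhds (by norm_num : (-1:ℝ) < 0) (by norm_num : (0:ℝ) < 1)] with t ht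
      apply ae_of_all
      intro x
      have htle : |t| ≤ 1 := abs_le.2 ⟨ht.1, ht.2⟩
      by_cases hx : x ∈ Set.Icc (-(R + M₁)) (R + M₁)
      · rw [Set.indicator_of_mem hx]
        apply ENNReal.ofReal_le_ofReal
        have hu := abs_le.1 (hB (ψ t x))
        have hw := abs_le.1 (hB x)
        nlinarith
      · rw [Set.indicator_of_notMem hx]
        have hax : R + M₁ < |x| := by
          rw [Set.mem_Icc, not_and_or, not_le, not_le] at hx
          rcases hx with h | h
          · calc R + M₁ < -x := by linarith
              _ ≤ |x| := neg_le_abs x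
          · exact h.trans_le (le_abs_self x)
        have hgx : g x = 0 := hgz x (by linarith)
        have hdisp := flow_displacement hM₁ hψ0 hψ t x
        have hgψ : g (ψ t x) = 0 := by
          apply hgz
          have h1 : M₁ * |t| ≤ M₁ := by nlinarith
          have h2 : |x| - |ψ t x| ≤ |ψ t x - x| := by
            have := abs_sub_abs_le_abs_sub x (ψ t x)
            rw [abs_sub_comm] at this
            linarith [this]
          linarith
        simp [hgx, hgψ]
    · rw [lintegral_indicator measurableSet_Icc]
      simp only [lintegral_const, Measure.restrict_apply MeasurableSet.univ, Set.univ_inter]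
      exact ENNReal.mul_ne_top ENNReal.ofReal_ne_top (by simp [Real.volume_Icc])
    · apply ae_of_all
      intro x
      have hcont : Tendsto (fun t => ψ t x) (𝓝 0) (𝓝 x) := by
        have h := (continuous_iff_continuousAt.2 fun t => (hψ t x).continuousAt).tendsto 0
        rwa [hψ0 x] at h
      have h1 : Tendsto (fun t => (g (ψ t x) - g x) ^ 2) (𝓝 0) (𝓝 ((g x - g x) ^ 2)) :=
        (((hg_cont.tendsto x).comp hcont).sub_const (g x)).pow 2
      have h2 := (ENNReal.continuous_ofReal.tendsto ((g x - g x) ^ 2)).comp h1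
      simpa [Function.comp_def] using h2
  -- key estimate
  have hDalt : (∫⁻ x, ENNReal.ofReal ((g x - f x) ^ 2)) = D := by
    apply lintegral_congr
    intro x
    rw [← neg_sub, neg_sq]
  have key : ∀ t : ℝ, |t| ≤ 1 → J t ≤ ENNReal.ofReal (r / 3) + 3 * G t := by
    intro t ht
    have hmeas1 : Measurable fun x : ℝ => ENNReal.ofReal ((f x - g x) ^ 2) :=
      ((hf.sub hgmeas).pow_const 2).ennreal_ofReal
    have hmeas1' : Measurable fun x : ℝ => ENNReal.ofReal ((f (ψ t x) - g (ψ t x)) ^ 2) :=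
      hmeas1.comp (hψt_meas t)
    have hmeas2 : Measurable fun x : ℝ => ENNReal.ofReal ((g (ψ t x) - g x) ^ 2) :=
      (((hgmeas.comp (hψt_meas t)).sub hgmeas).pow_const 2).ennreal_ofReal
    have hmeas3 : Measurable fun x : ℝ => ENNReal.ofReal ((g x - f x) ^ 2) :=
      ((hgmeas.sub hf).pow_const 2).ennreal_ofReal
    have step1 : J t ≤ 3 * (∫⁻ x, ENNReal.ofReal ((f (ψ t x) - g (ψ t x)) ^ 2))
        + 3 * G t + 3 * (∫⁻ x, ENNReal.ofReal ((g x - f x) ^ 2)) := by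
      calc J t ≤ ∫⁻ x, (3 * ENNReal.ofReal ((f (ψ t x) - g (ψ t x)) ^ 2)
            + 3 * ENNReal.ofReal ((g (ψ t x) - g x) ^ 2)
            + 3 * ENNReal.ofReal ((g x - f x) ^ 2)) :=
          lintegral_mono fun x => ofReal_sq_bound (f (ψ t x)) (f x) (g (ψ t x)) (g x)
        _ = _ := by
          rw [lintegral_add_right _ (hmeas3.const_mul 3),
            lintegral_add_right _ (hmeas2.const_mul 3),
            lintegral_const_mul 3 hmeas1', lintegral_const_mul 3 hmeas2,
            lintegral_const_mul 3 hmeas3]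
    have step2 : (∫⁻ x, ENNReal.ofReal ((f (ψ t x) - g (ψ t x)) ^ 2))
        ≤ ENNReal.ofReal (Real.exp K) * D := by
      have h := flow_lintegral_bound hv hψ0 hψ t (h := fun y => ENNReal.ofReal ((f y - g y) ^ 2))
        hmeas1
      refine h.trans (mul_le_mul_left (ENNReal.ofReal_le_ofReal ?_) _)
      apply Real.exp_le_exp.2
      nlinarith [K.coe_nonneg]
    have step3 : 3 * (ENNReal.ofReal (Real.exp K) * ENNReal.ofReal δ)
        + 3 * ENNReal.ofReal δ = ENNReal.ofReal (3 * Real.exp ↑K * δ + 3 * δ) := by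
      rw [ENNReal.ofReal_add (by positivity) (by positivity),
        show (3:ℝ) * Real.exp ↑K * δ = 3 * (Real.exp ↑K * δ) by ring,
        ENNReal.ofReal_mul (by norm_num : (0:ℝ) ≤ 3),
        ENNReal.ofReal_mul (Real.exp_nonneg _),
        ENNReal.ofReal_mul (by norm_num : (0:ℝ) ≤ 3)]
      norm_num
    have hδeq : 3 * Real.exp ↑K * δ + 3 * δ = r / 3 := by
      rw [hδdef]
      field_simp
      ring
    calc J t ≤ 3 * (ENNReal.ofReal (Real.exp K) * D) + 3 * G t + 3 * D := by
          rw [hDalt] at step1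
          refine step1.trans ?_
          gcongr
        _ ≤ 3 * (ENNReal.ofReal (Real.exp K) * ENNReal.ofReal δ) + 3 * G t
            + 3 * ENNReal.ofReal δ := by gcongr
        _ = ENNReal.ofReal (r / 3) + 3 * G t := by
          rw [add_right_comm, step3, hδeq]
  -- conclude
  have hG18 : ∀ᶠ t in 𝓝 (0:ℝ), G t ≤ ENNReal.ofReal (r / 18) :=
    (ENNReal.tendsto_nhds_zero.1 hGlim) _ (ENNReal.ofReal_pos.2 (by positivity))
  filter_upwards [hG18, Icc_mem_nhds (by norm_num : (-1:ℝ) < 0) (by norm_num : (0:ℝ) < 1)]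
    with t hGt ht
  have htle : |t| ≤ 1 := abs_le.2 ⟨ht.1, ht.2⟩
  calc J t ≤ ENNReal.ofReal (r / 3) + 3 * G t := key t htle
    _ ≤ ENNReal.ofReal (r / 3) + 3 * ENNReal.ofReal (r / 18) := by gcongr
    _ = ENNReal.ofReal (r / 3) + ENNReal.ofReal (3 * (r / 18)) := by
        rw [ENNReal.ofReal_mul (by norm_num : (0:ℝ) ≤ 3)]; norm_num
    _ = ENNReal.ofReal (r / 3 + 3 * (r / 18)) := by
        rw [ENNReal.ofReal_add (by positivity) (by positivity)]
    _ ≤ ENNReal.ofReal r := ENNReal.ofReal_le_ofReal (by linarith)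
    _ = ε₀ := ENNReal.ofReal_toReal hε₀top
    _ ≤ ε := min_le_left _ _
end

section
/- Let ξ : ℝ → ℝ be continuously differentiable with ξ and ξ′ bounded, and let ψ be the flow of ξ∂_x. Then for every continuously differentiable f : ℝ → ℝ with f and f′ square-integrable, ∫_ℝ ( (f(ψ(t,x)) − f(x))/t − ξ(x)f′(x) )² dx → 0 as t → 0; i.e. the generator of the strongly continuous group U_t^ξ f := f∘ψ(t,·) on L²(ℝ) acts on such f as the first-order differential operator ξ∂_x. -/
open MeasureTheory Filter Topology Set
open scoped NNReal ENNReal Interval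

namespace CompGen

variable {ξ : ℝ → ℝ} {ψ : ℝ → ℝ → ℝ} {L : ℝ≥0} {M : ℝ}

/-- Time-Lipschitz bound for the flow. -/
theorem psi_time_lip (hMb : ∀ x, |ξ x| ≤ M)
    (hψ : ∀ (t x : ℝ), HasDerivAt (fun s => ψ s x) (ξ (ψ t x)) t) (x : ℝ) :
    LipschitzWith M.toNNReal (fun s => ψ s x) := by
  apply lipschitzWith_of_nnnorm_deriv_le (fun s => (hψ s x).differentiableAt)
  intro s
  rw [(hψ s x).deriv]
  apply NNReal.coe_le_coe.mp
  rw [coe_nnnorm, Real.norm_eq_abs]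
  exact (hMb _).trans (Real.le_coe_toNNReal M)

/-- Space-Lipschitz bound for the flow (Grönwall). -/
theorem psi_lip (hlip : LipschitzWith L ξ) (hψ0 : ∀ x : ℝ, ψ 0 x = x)
    (hψ : ∀ (t x : ℝ), HasDerivAt (fun s => ψ s x) (ξ (ψ t x)) t) (s : ℝ) :
    LipschitzWith (Real.exp (L * |s|)).toNNReal (fun x => ψ s x) := by
  apply LipschitzWith.of_dist_le_mul
  intro x y
  rw [Real.coe_toNNReal _ (Real.exp_nonneg _)]
  rcases le_or_gt 0 s with hs | hs
  · have key := dist_le_of_trajectories_ODE (v := fun _ y => ξ y) (K := L)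
      (f := fun τ => ψ τ x) (g := fun τ => ψ τ y) (a := 0) (b := s) (δ := dist x y)
      (fun _ => hlip)
      (fun τ _ => (hψ τ x).continuousAt.continuousWithinAt)
      (fun τ _ => (hψ τ x).hasDerivWithinAt)
      (fun τ _ => (hψ τ y).continuousAt.continuousWithinAt)
      (fun τ _ => (hψ τ y).hasDerivWithinAt)
      (by simp [hψ0])
    have := key s ⟨hs, le_rfl⟩
    simpa [abs_of_nonneg hs, mul_comm] using this
  · have hderx : ∀ τ : ℝ, HasDerivAt (fun τ' => ψ (-τ') x) (-ξ (ψ (-τ) x)) τ := by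
      intro τ
      have h1 := HasDerivAt.comp τ (hψ (-τ) x) (hasDerivAt_neg τ)
      simpa [mul_comm, Function.comp_def] using h1
    have hdery : ∀ τ : ℝ, HasDerivAt (fun τ' => ψ (-τ') y) (-ξ (ψ (-τ) y)) τ := by
      intro τ
      have h1 := HasDerivAt.comp τ (hψ (-τ) y) (hasDerivAt_neg τ)
      simpa [mul_comm, Function.comp_def] using h1
    have hlipneg : LipschitzWith L (fun y => -ξ y) := by
      apply LipschitzWith.of_dist_le_mul
      intro a b
      rw [dist_neg_neg]
      exact hlip.dist_le_mul a b
    have key := dist_le_of_trajectories_ODE (v := fun _ y => -ξ y) (K := L)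
      (f := fun τ => ψ (-τ) x) (g := fun τ => ψ (-τ) y) (a := 0) (b := -s) (δ := dist x y)
      (fun _ => hlipneg)
      (fun τ _ => (hderx τ).continuousAt.continuousWithinAt)
      (fun τ _ => (hderx τ).hasDerivWithinAt)
      (fun τ _ => (hdery τ).continuousAt.continuousWithinAt)
      (fun τ _ => (hdery τ).hasDerivWithinAt)
      (by simp [hψ0])
    have := key (-s) ⟨by linarith, le_rfl⟩
    simpa [abs_of_neg hs, mul_comm] using this

/-- Group law for the flow. -/
theorem psi_add (hlip : LipschitzWith L ξ) (hψ0 : ∀ x : ℝ, ψ 0 x = x)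
    (hψ : ∀ (t x : ℝ), HasDerivAt (fun s => ψ s x) (ξ (ψ t x)) t) (a b x : ℝ) :
    ψ (a + b) x = ψ b (ψ a x) := by
  have key := ODE_solution_unique_of_mem_Ioo (v := fun _ y => ξ y) (K := L)
    (s := fun _ => (univ : Set ℝ)) (fun _ _ => hlip.lipschitzOnWith)
    (t₀ := 0) (a := -(|b| + 1)) (b := |b| + 1)
    (f := fun τ => ψ (a + τ) x) (g := fun τ => ψ τ (ψ a x))
    (ht := ⟨by linarith [abs_nonneg b], by linarith [abs_nonneg b]⟩)
    (hf := ?_) (hg := ?_) (heq := by simp [hψ0])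
  · exact key ⟨by cases abs_cases b <;> linarith, by cases abs_cases b <;> linarith⟩
  · intro τ _
    refine ⟨?_, trivial⟩
    have h1 := HasDerivAt.comp τ (hψ (a + τ) x) ((hasDerivAt_id τ).const_add a)
    simpa [Function.comp_def] using h1
  · intro τ _
    exact ⟨hψ τ (ψ a x), trivial⟩

theorem psi_inv (hlip : LipschitzWith L ξ) (hψ0 : ∀ x : ℝ, ψ 0 x = x)
    (hψ : ∀ (t x : ℝ), HasDerivAt (fun s => ψ s x) (ξ (ψ t x)) t) (s x : ℝ) :
    ψ (-s) (ψ s x) = x := by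
  have := psi_add hlip hψ0 hψ s (-s) x
  rw [add_neg_cancel, hψ0] at this
  exact this.symm

/-- Change of variables bound for the flow. -/
theorem lintegral_comp_le (hlip : LipschitzWith L ξ) (hψ0 : ∀ x : ℝ, ψ 0 x = x)
    (hψ : ∀ (t x : ℝ), HasDerivAt (fun s => ψ s x) (ξ (ψ t x)) t) (s : ℝ)
    (φ : ℝ → ℝ≥0∞) (hφ : Measurable φ) :
    ∫⁻ x, φ (ψ s x) ≤ ((Real.exp (L * |s|)).toNNReal : ℝ≥0∞) * ∫⁻ x, φ x := by
  set K' := (Real.exp ((L : ℝ) * |s|)).toNNReal with hK'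
  have hlips := psi_lip hlip hψ0 hψ s
  have hlipinv : LipschitzWith K' (fun x => ψ (-s) x) := by
    have := psi_lip hlip hψ0 hψ (-s); rwa [abs_neg] at this
  have hmeasψ : Measurable (fun x => ψ s x) := hlips.continuous.measurable
  have hmap : Measure.map (fun x => ψ s x) volume ≤ (K' : ℝ≥0∞) • volume := by
    rw [Measure.le_iff]
    intro A hA
    rw [Measure.map_apply hmeasψ hA]
    have hpre : (fun x => ψ s x) ⁻¹' A = (fun x => ψ (-s) x) '' A := by
      ext y
      constructor
      · intro hy
        exact ⟨ψ s y, hy, psi_inv hlip hψ0 hψ s y⟩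
      · rintro ⟨z, hz, rfl⟩
        have : ψ s (ψ (-s) z) = z := by
          have := psi_inv hlip hψ0 hψ (-s) z
          rwa [neg_neg] at this
        simpa [this]
    rw [hpre, Measure.smul_apply, smul_eq_mul]
    calc volume ((fun x => ψ (-s) x) '' A)
        = μH[1] ((fun x => ψ (-s) x) '' A) := by rw [MeasureTheory.hausdorffMeasure_real]
      _ ≤ (K' : ℝ≥0∞) ^ (1 : ℝ) * μH[1] A :=
          hlipinv.hausdorffMeasure_image_le zero_le_one A
      _ = (K' : ℝ≥0∞) * volume A := by
          rw [ENNReal.rpow_one, MeasureTheory.hausdorffMeasure_real]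
  calc ∫⁻ x, φ (ψ s x) = ∫⁻ y, φ y ∂(Measure.map (fun x => ψ s x) volume) :=
        (lintegral_map hφ hmeasψ).symm
    _ ≤ ∫⁻ y, φ y ∂((K' : ℝ≥0∞) • volume) := lintegral_mono' hmap le_rfl
    _ = (K' : ℝ≥0∞) * ∫⁻ y, φ y := lintegral_smul_measure _ _

/-- Joint continuity of the flow. -/
theorem psi_jcont (hlip : LipschitzWith L ξ) (hψ0 : ∀ x : ℝ, ψ 0 x = x)
    (hψ : ∀ (t x : ℝ), HasDerivAt (fun s => ψ s x) (ξ (ψ t x)) t)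
    (hM0 : 0 ≤ M) (hMb : ∀ x, |ξ x| ≤ M) :
    Continuous fun p : ℝ × ℝ => ψ p.1 p.2 := by
  rw [continuous_iff_continuousAt]
  rintro ⟨s₀, x₀⟩
  rw [Metric.continuousAt_iff]
  intro ε hε
  set C := Real.exp (L * (|s₀| + 1)) with hC
  have hCpos : 0 < C := Real.exp_pos _
  set D := ε / (C + M + 1) with hD
  have hDpos : 0 < D := by positivity
  refine ⟨min 1 D, lt_min one_pos hDpos, ?_⟩
  rintro ⟨s, x⟩ hd
  rw [Prod.dist_eq] at hd
  have h1 : dist s s₀ < min 1 D := lt_of_le_of_lt (le_max_left _ _) hd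
  have h2 : dist x x₀ < min 1 D := lt_of_le_of_lt (le_max_right _ _) hd
  have hs1 : |s| ≤ |s₀| + 1 := by
    have ha := abs_sub_abs_le_abs_sub s s₀
    have hb : |s - s₀| < 1 := by
      rw [Real.dist_eq] at h1
      exact lt_of_lt_of_le h1 (min_le_left _ _)
    linarith
  have hlx : dist (ψ s x) (ψ s x₀) ≤ C * dist x x₀ := by
    have hd1 := (psi_lip hlip hψ0 hψ s).dist_le_mul x x₀
    rw [Real.coe_toNNReal _ (Real.exp_nonneg _)] at hd1
    refine hd1.trans ?_
    have : Real.exp (L * |s|) ≤ C := by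
      rw [hC]
      apply Real.exp_le_exp.mpr
      exact mul_le_mul_of_nonneg_left hs1 L.coe_nonneg
    exact mul_le_mul_of_nonneg_right this dist_nonneg
  have hts : dist (ψ s x₀) (ψ s₀ x₀) ≤ M * dist s s₀ := by
    have hd2 := (psi_time_lip hMb hψ x₀).dist_le_mul s s₀
    rwa [Real.coe_toNNReal _ hM0] at hd2
  have e1 : C * dist x x₀ < C * D :=
    mul_lt_mul_of_pos_left (lt_of_lt_of_le h2 (min_le_right _ _)) hCpos
  have e2 : M * dist s s₀ ≤ M * D :=
    mul_le_mul_of_nonneg_left (le_of_lt (lt_of_lt_of_le h1 (min_le_right _ _))) hM0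
  have e3 : (C + M + 1) * D = ε := by
    rw [hD]; field_simp
  calc dist (ψ s x) (ψ s₀ x₀) ≤ dist (ψ s x) (ψ s x₀) + dist (ψ s x₀) (ψ s₀ x₀) :=
        dist_triangle _ _ _
    _ ≤ C * dist x x₀ + M * dist s s₀ := add_le_add hlx hts
    _ < ε := by nlinarith

/-- The `L²` norm of a composition with the flow. -/
theorem eLpNorm_comp_le (hlip : LipschitzWith L ξ) (hψ0 : ∀ x : ℝ, ψ 0 x = x)
    (hψ : ∀ (t x : ℝ), HasDerivAt (fun s => ψ s x) (ξ (ψ t x)) t) (s : ℝ)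
    (h : ℝ → ℝ) (hh : Measurable h) :
    eLpNorm (fun x => h (ψ s x)) 2 volume ≤
      ((Real.exp (L * |s|)).toNNReal : ℝ≥0∞) ^ (1/2 : ℝ) * eLpNorm h 2 volume := by
  rw [eLpNorm_eq_lintegral_rpow_enorm_toReal two_ne_zero ENNReal.ofNat_ne_top,
      eLpNorm_eq_lintegral_rpow_enorm_toReal two_ne_zero ENNReal.ofNat_ne_top]
  simp only [enorm_eq_nnnorm]
  have h2 : ((2:ℝ≥0∞)).toReal = 2 := by norm_num
  rw [h2]
  have hconv : ∀ a : ℝ≥0∞, a ^ (2:ℝ) = a ^ (2:ℕ) := fun a => by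
    rw [← ENNReal.rpow_natCast]; norm_num
  simp only [hconv]
  have hφm : Measurable fun y => ((‖h y‖₊ : ℝ≥0∞)) ^ (2:ℕ) :=
    (hh.nnnorm.coe_nnreal_ennreal).pow_const _
  have key := lintegral_comp_le hlip hψ0 hψ s (fun y => ((‖h y‖₊ : ℝ≥0∞)) ^ (2:ℕ)) hφm
  calc (∫⁻ x, ((‖h (ψ s x)‖₊ : ℝ≥0∞)) ^ (2:ℕ)) ^ (1/2 : ℝ)
      ≤ (((Real.exp (L * |s|)).toNNReal : ℝ≥0∞) * ∫⁻ y, ((‖h y‖₊ : ℝ≥0∞)) ^ (2:ℕ)) ^ (1/2 : ℝ) :=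
        ENNReal.rpow_le_rpow key (by norm_num)
    _ = ((Real.exp (L * |s|)).toNNReal : ℝ≥0∞) ^ (1/2 : ℝ) *
        (∫⁻ y, ((‖h y‖₊ : ℝ≥0∞)) ^ (2:ℕ)) ^ (1/2 : ℝ) :=
        ENNReal.mul_rpow_of_nonneg _ _ (by norm_num)

/-- Cauchy-Schwarz for lower integrals. -/
theorem lint_sq_le {μ : Measure ℝ} (w : ℝ → ℝ≥0∞) (hw : AEMeasurable w μ) :
    (∫⁻ s, w s ∂μ) ^ (2:ℕ) ≤ (∫⁻ s, (w s) ^ (2:ℕ) ∂μ) * μ univ := by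
  have hpq : Real.HolderConjugate 2 2 := Real.holderConjugate_iff.mpr ⟨one_lt_two, by norm_num⟩
  have key := ENNReal.lintegral_mul_le_Lp_mul_Lq μ hpq hw (aemeasurable_const (b := (1:ℝ≥0∞)))
  simp only [Pi.mul_apply, mul_one, ENNReal.one_rpow, lintegral_one] at key
  have hconv : ∀ a : ℝ≥0∞, a ^ (2:ℝ) = a ^ (2:ℕ) := fun a => by
    rw [← ENNReal.rpow_natCast]; norm_num
  calc (∫⁻ s, w s ∂μ) ^ (2:ℕ)
      ≤ (((∫⁻ a, w a ^ (2:ℝ) ∂μ) ^ (1/2:ℝ)) * (μ univ ^ (1/2:ℝ))) ^ (2:ℕ) :=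
        pow_le_pow_left₀ zero_le key 2
    _ = (∫⁻ a, w a ^ (2:ℝ) ∂μ) * μ univ := by
        rw [mul_pow, ← ENNReal.rpow_natCast (_ ^ (1/2:ℝ)) 2,
          ← ENNReal.rpow_natCast (μ univ ^ (1/2:ℝ)) 2,
          ← ENNReal.rpow_mul, ← ENNReal.rpow_mul]
        norm_num
    _ = (∫⁻ s, w s ^ (2:ℕ) ∂μ) * μ univ := by
        congr 1
        apply lintegral_congr
        intro a
        rw [← ENNReal.rpow_natCast]
        norm_num

/-- Dominated convergence for compactly supported continuous functions. -/
theorem cc_tendsto (hlip : LipschitzWith L ξ) (hψ0 : ∀ x : ℝ, ψ 0 x = x)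
    (hψ : ∀ (t x : ℝ), HasDerivAt (fun s => ψ s x) (ξ (ψ t x)) t)
    (hM0 : 0 ≤ M) (hMb : ∀ x, |ξ x| ≤ M)
    (g₀ : ℝ → ℝ) (hg₀c : Continuous g₀) (hg₀s : HasCompactSupport g₀) :
    Tendsto (fun s => ∫⁻ x, (‖g₀ (ψ s x) - g₀ x‖₊ : ℝ≥0∞) ^ (2:ℕ)) (𝓝 0) (𝓝 0) := by
  obtain ⟨C, hC⟩ := hg₀s.exists_bound_of_continuous hg₀c
  have hC0 : 0 ≤ C := le_trans (norm_nonneg _) (hC 0)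
  set K : Set ℝ := Metric.cthickening M (tsupport g₀) with hK
  have hKc : IsCompact K := IsCompact.cthickening hg₀s
  have hKm : MeasurableSet K := Metric.isClosed_cthickening.measurableSet
  have hbound_fin : ∫⁻ x, K.indicator (fun _ => ENNReal.ofReal ((2*C)^2)) x ≠ ⊤ := by
    rw [lintegral_indicator hKm, setLIntegral_const]
    exact (ENNReal.mul_lt_top ENNReal.ofReal_lt_top hKc.measure_lt_top).ne
  have key := tendsto_lintegral_filter_of_dominated_convergence (μ := volume) (l := 𝓝 (0:ℝ))
    (F := fun s x => (‖g₀ (ψ s x) - g₀ x‖₊ : ℝ≥0∞) ^ (2:ℕ)) (f := fun _ => 0)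
    (K.indicator fun _ => ENNReal.ofReal ((2*C)^2)) ?_ ?_ hbound_fin ?_
  · simpa using key
  · apply Eventually.of_forall; intro s
    have hc : Continuous fun x => ψ s x := (psi_lip hlip hψ0 hψ s).continuous
    exact ((((hg₀c.comp hc).sub hg₀c).nnnorm).measurable.coe_nnreal_ennreal).pow_const 2
  · have h1 : ∀ᶠ s : ℝ in 𝓝 0, |s| ≤ 1 := by
      filter_upwards [Metric.closedBall_mem_nhds (0:ℝ) one_pos] with s hs
      simpa [Real.dist_eq] using hs
    filter_upwards [h1] with s hs
    apply ae_of_all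
    intro x
    by_cases hx : x ∈ K
    · rw [Set.indicator_of_mem hx]
      have hle : ‖g₀ (ψ s x) - g₀ x‖ ≤ 2*C := by
        calc ‖g₀ (ψ s x) - g₀ x‖ ≤ ‖g₀ (ψ s x)‖ + ‖g₀ x‖ := norm_sub_le _ _
          _ ≤ 2*C := by linarith [hC (ψ s x), hC x]
      calc ((‖g₀ (ψ s x) - g₀ x‖₊ : ℝ≥0∞)) ^ (2:ℕ) ≤ (ENNReal.ofReal (2*C)) ^ (2:ℕ) := by
            gcongr
            rw [← enorm_eq_nnnorm, ← ofReal_norm]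
            exact ENNReal.ofReal_le_ofReal hle
        _ = ENNReal.ofReal ((2*C)^2) := by
            rw [← ENNReal.ofReal_pow (by linarith)]
    · rw [Set.indicator_of_notMem hx]
      have hx1 : g₀ x = 0 := by
        apply image_eq_zero_of_notMem_tsupport
        intro hmem; exact hx (Metric.self_subset_cthickening _ hmem)
      have hx2 : g₀ (ψ s x) = 0 := by
        apply image_eq_zero_of_notMem_tsupport
        intro hmem
        apply hx
        apply Metric.mem_cthickening_of_dist_le x (ψ s x) M _ hmem
        have hd := (psi_time_lip hMb hψ x).dist_le_mul s 0
        rw [Real.coe_toNNReal _ hM0] at hd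
        have hx0 : ψ 0 x = x := hψ0 x
        calc dist x (ψ s x) = dist (ψ s x) (ψ 0 x) := by rw [hx0, dist_comm]
          _ ≤ M * dist s 0 := hd
          _ ≤ M * 1 := by
              apply mul_le_mul_of_nonneg_left _ hM0
              rwa [Real.dist_eq, sub_zero]
          _ = M := mul_one M
      simp [hx1, hx2]
  · apply ae_of_all; intro x
    have hcs : Tendsto (fun s => ψ s x) (𝓝 0) (𝓝 x) := by
      have := (hψ 0 x).continuousAt.tendsto
      rwa [hψ0 x] at this
    have h2 : Tendsto (fun s => g₀ (ψ s x) - g₀ x) (𝓝 0) (𝓝 0) := by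
      have := ((hg₀c.tendsto x).comp hcs).sub (tendsto_const_nhds (x := g₀ x))
      simpa using this
    have h3 : Tendsto (fun s => (‖g₀ (ψ s x) - g₀ x‖₊ : ℝ≥0∞)) (𝓝 0) (𝓝 0) := by
      have hc : Continuous fun y : ℝ => ((‖y‖₊ : ℝ≥0∞)) :=
        ENNReal.continuous_coe.comp continuous_nnnorm
      have := (hc.tendsto (0:ℝ)).comp h2
      simpa [Function.comp_def] using this
    have := ((ENNReal.continuous_pow 2).tendsto (0:ℝ≥0∞)).comp h3
    simpa [Function.comp_def] using this

/-- Strong continuity of the composition group, quantitative form. -/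
theorem strong_cont (hlip : LipschitzWith L ξ) (hψ0 : ∀ x : ℝ, ψ 0 x = x)
    (hψ : ∀ (t x : ℝ), HasDerivAt (fun s => ψ s x) (ξ (ψ t x)) t)
    (hM0 : 0 ≤ M) (hMb : ∀ x, |ξ x| ≤ M)
    (g : ℝ → ℝ) (hgc : Continuous g) (hg2 : MemLp g 2 volume) :
    ∀ ε : ℝ≥0∞, 0 < ε → ∀ᶠ s in 𝓝 (0:ℝ),
      (∫⁻ x, (‖g (ψ s x) - g x‖₊ : ℝ≥0∞) ^ (2:ℕ)) ≤ ε := by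
  intro ε hε
  set η : ℝ≥0∞ := min 1 (ε / 9) with hη
  have hη0 : 0 < η := lt_min one_pos (ENNReal.div_pos hε.ne' (by norm_num))
  have hη1 : η ≤ 1 := min_le_left _ _
  have hηtop : η ≠ ⊤ := (lt_of_le_of_lt hη1 ENNReal.one_lt_top).ne
  have hηε : 9 * η ≤ ε := by
    calc 9 * η ≤ 9 * (ε/9) := by gcongr; exact min_le_right _ _
      _ ≤ ε := ENNReal.mul_div_le
  have hη2 : η/2 ≠ 0 := (ENNReal.div_pos hη0.ne' (by norm_num)).ne'
  obtain ⟨g₀, hg₀s, hg₀close, hg₀c, _⟩ :=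
    hg2.exists_hasCompactSupport_eLpNorm_sub_le ENNReal.ofNat_ne_top hη2
  have hEexp : ∀ᶠ s : ℝ in 𝓝 0, Real.exp (L * |s|) ≤ 4 := by
    have hcont : Continuous fun s : ℝ => Real.exp (L * |s|) :=
      Real.continuous_exp.comp (continuous_const.mul continuous_abs)
    have hval : Tendsto (fun s : ℝ => Real.exp (L * |s|)) (𝓝 0) (𝓝 1) := by
      have := hcont.tendsto 0
      simpa using this
    filter_upwards [hval.eventually_lt_const (by norm_num : (1:ℝ) < 4)] with s hs
    exact hs.le
  have hT2 := cc_tendsto hlip hψ0 hψ hM0 hMb g₀ hg₀c hg₀s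
  have hT2' : ∀ᶠ s : ℝ in 𝓝 0,
      (∫⁻ x, (‖g₀ (ψ s x) - g₀ x‖₊ : ℝ≥0∞) ^ (2:ℕ)) < η ^ (2:ℕ) :=
    hT2.eventually_lt_const (ENNReal.pow_pos hη0 2)
  filter_upwards [hEexp, hT2'] with s hs4 hs2
  have hcψ : Continuous fun x => ψ s x := (psi_lip hlip hψ0 hψ s).continuous
  have hsm1 : AEStronglyMeasurable (fun x => (g - g₀) (ψ s x)) volume :=
    ((hgc.sub hg₀c).comp hcψ).aestronglyMeasurable
  have hsm2 : AEStronglyMeasurable (fun x => g₀ (ψ s x) - g₀ x) volume :=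
    ((hg₀c.comp hcψ).sub hg₀c).aestronglyMeasurable
  have hsm3 : AEStronglyMeasurable (g₀ - g) volume := (hg₀c.sub hgc).aestronglyMeasurable
  have hsplit : (fun x => g (ψ s x) - g x) =
      (fun x => (g - g₀) (ψ s x)) + ((fun x => g₀ (ψ s x) - g₀ x) + (g₀ - g)) := by
    funext x
    simp only [Pi.add_apply, Pi.sub_apply]
    ring
  have hb1 : eLpNorm (fun x => (g - g₀) (ψ s x)) 2 volume ≤ η := by
    have hcomp := eLpNorm_comp_le hlip hψ0 hψ s (g - g₀) (hgc.sub hg₀c).measurable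
    refine hcomp.trans ?_
    have hK2 : ((Real.exp (L * |s|)).toNNReal : ℝ≥0∞) ^ (1/2:ℝ) ≤ 2 := by
      have h4 : ((Real.exp (L * |s|)).toNNReal : ℝ≥0∞) ≤ 4 := by
        have : ((Real.exp (L * |s|)).toNNReal : ℝ≥0∞) = ENNReal.ofReal (Real.exp (L * |s|)) := rfl
        rw [this]
        calc ENNReal.ofReal (Real.exp (L * |s|)) ≤ ENNReal.ofReal 4 :=
              ENNReal.ofReal_le_ofReal hs4
          _ = 4 := by norm_num
      calc ((Real.exp (L * |s|)).toNNReal : ℝ≥0∞) ^ (1/2:ℝ) ≤ (4:ℝ≥0∞) ^ (1/2:ℝ) :=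
            ENNReal.rpow_le_rpow h4 (by norm_num)
        _ = 2 := by
            rw [show (4:ℝ≥0∞) = 2^(2:ℕ) by norm_num, ← ENNReal.rpow_natCast,
              ← ENNReal.rpow_mul]
            norm_num
    calc ((Real.exp (L * |s|)).toNNReal : ℝ≥0∞) ^ (1/2:ℝ) * eLpNorm (g - g₀) 2 volume
        ≤ 2 * (η/2) := by
          apply mul_le_mul' hK2 hg₀close
      _ ≤ η := ENNReal.mul_div_le
  have hb2 : eLpNorm (fun x => g₀ (ψ s x) - g₀ x) 2 volume ≤ η := by
    rw [eLpNorm_eq_lintegral_rpow_enorm_toReal two_ne_zero ENNReal.ofNat_ne_top]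
    simp only [enorm_eq_nnnorm]
    have h2 : ((2:ℝ≥0∞)).toReal = 2 := by norm_num
    rw [h2]
    have hconv : ∀ a : ℝ≥0∞, a ^ (2:ℝ) = a ^ (2:ℕ) := fun a => by
      rw [← ENNReal.rpow_natCast]; norm_num
    simp only [hconv]
    calc (∫⁻ x, (‖g₀ (ψ s x) - g₀ x‖₊ : ℝ≥0∞) ^ (2:ℕ)) ^ (1/2:ℝ)
        ≤ (η ^ (2:ℕ)) ^ (1/2:ℝ) := ENNReal.rpow_le_rpow hs2.le (by norm_num)
      _ = η := by
          rw [← ENNReal.rpow_natCast, ← ENNReal.rpow_mul]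
          norm_num
  have hb3 : eLpNorm (g₀ - g) 2 volume ≤ η := by
    rw [eLpNorm_sub_comm]
    exact hg₀close.trans ENNReal.half_le_self
  have htot : eLpNorm (fun x => g (ψ s x) - g x) 2 volume ≤ 3 * η := by
    rw [hsplit]
    calc eLpNorm _ 2 volume ≤ eLpNorm (fun x => (g - g₀) (ψ s x)) 2 volume +
          eLpNorm ((fun x => g₀ (ψ s x) - g₀ x) + (g₀ - g)) 2 volume :=
          eLpNorm_add_le hsm1 (hsm2.add hsm3) one_le_two
      _ ≤ eLpNorm (fun x => (g - g₀) (ψ s x)) 2 volume +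
          (eLpNorm (fun x => g₀ (ψ s x) - g₀ x) 2 volume + eLpNorm (g₀ - g) 2 volume) := by
          gcongr
          exact eLpNorm_add_le hsm2 hsm3 one_le_two
      _ ≤ η + (η + η) := by gcongr
      _ = 3 * η := by ring
  have hfinal : (∫⁻ x, (‖g (ψ s x) - g x‖₊ : ℝ≥0∞) ^ (2:ℕ)) =
      (eLpNorm (fun x => g (ψ s x) - g x) 2 volume) ^ (2:ℕ) := by
    rw [eLpNorm_eq_lintegral_rpow_enorm_toReal two_ne_zero ENNReal.ofNat_ne_top]
    simp only [enorm_eq_nnnorm]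
    have h2 : ((2:ℝ≥0∞)).toReal = 2 := by norm_num
    rw [h2]
    have hconv : ∀ a : ℝ≥0∞, a ^ (2:ℝ) = a ^ (2:ℕ) := fun a => by
      rw [← ENNReal.rpow_natCast]; norm_num
    simp only [hconv]
    rw [← ENNReal.rpow_natCast (_ ^ (1/2:ℝ)) 2, ← ENNReal.rpow_mul]
    norm_num
  rw [hfinal]
  calc (eLpNorm (fun x => g (ψ s x) - g x) 2 volume) ^ (2:ℕ) ≤ (3 * η) ^ (2:ℕ) := by
        gcongr
    _ = 9 * (η * η) := by ring
    _ ≤ 9 * (η * 1) := by gcongr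
    _ = 9 * η := by rw [mul_one]
    _ ≤ ε := hηε

end CompGen

/-- The generator of the composition group `U_t^ξ f := f∘ψ(t,·)` on `L²(ℝ)`
acts on `C¹` functions `f` with `f, f′ ∈ L²` as the first-order differential
operator `ξ∂ₓ`: `(U_t f − f)/t → ξ·f′` in `L²` as `t → 0`. -/
theorem composition_group_generator (ξ : ℝ → ℝ) (ψ : ℝ → ℝ → ℝ)
    (hξ : ContDiff ℝ 1 ξ)
    (hξb : ∃ M, ∀ x, |ξ x| ≤ M) (hξ'b : ∃ M, ∀ x, |deriv ξ x| ≤ M)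
    (hψ0 : ∀ x : ℝ, ψ 0 x = x)
    (hψ : ∀ (t x : ℝ), HasDerivAt (fun s => ψ s x) (ξ (ψ t x)) t) :
    ∀ f : ℝ → ℝ, ContDiff ℝ 1 f →
      Integrable (fun x => (f x) ^ 2) →
      Integrable (fun x => (deriv f x) ^ 2) →
      Tendsto (fun t : ℝ => ∫ x : ℝ, ((f (ψ t x) - f x) / t - ξ x * deriv f x) ^ 2)
        (𝓝[≠] 0) (𝓝 0) := by
  intro f hf hf2 hf'2
  obtain ⟨M, hMb⟩ := hξb
  have hM0 : 0 ≤ M := le_trans (abs_nonneg _) (hMb 0)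
  obtain ⟨M', hM'b⟩ := hξ'b
  set L : ℝ≥0 := M'.toNNReal with hL
  have hlip : LipschitzWith L ξ := by
    apply lipschitzWith_of_nnnorm_deriv_le (hξ.differentiable one_ne_zero)
    intro x
    apply NNReal.coe_le_coe.mp
    rw [coe_nnnorm, Real.norm_eq_abs]
    exact (hM'b x).trans (Real.le_coe_toNNReal M')
  set g : ℝ → ℝ := fun x => ξ x * deriv f x with hgdef
  have hderivfc : Continuous (deriv f) := hf.continuous_deriv le_rfl
  have hgc : Continuous g := (hξ.continuous).mul hderivfc
  have hg2 : MemLp g 2 volume := by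
    rw [memLp_two_iff_integrable_sq hgc.aestronglyMeasurable]
    apply Integrable.mono (hf'2.const_mul (M^2)) (hgc.pow 2).aestronglyMeasurable
    apply ae_of_all
    intro x
    rw [Real.norm_eq_abs, Real.norm_eq_abs, hgdef]
    simp only [Pi.pow_apply]
    have h2 : (ξ x)^2 ≤ M^2 := by nlinarith [hMb x, abs_nonneg (ξ x), sq_abs (ξ x)]
    rw [abs_of_nonneg (sq_nonneg (ξ x * deriv f x)),
      abs_of_nonneg (by positivity : (0:ℝ) ≤ M^2 * deriv f x ^ 2), mul_pow]
    nlinarith [sq_nonneg (deriv f x)]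
  have hjc : Continuous fun p : ℝ × ℝ => ψ p.1 p.2 :=
    CompGen.psi_jcont hlip hψ0 hψ hM0 hMb
  have hcont_s : ∀ x : ℝ, Continuous fun s => ψ s x := fun x =>
    continuous_iff_continuousAt.mpr (fun s => (hψ s x).continuousAt)
  have hder : ∀ (s x : ℝ), HasDerivAt (fun τ => f (ψ τ x)) (g (ψ s x)) s := by
    intro s x
    have h1 := HasDerivAt.comp s (((hf.differentiable one_ne_zero) (ψ s x)).hasDerivAt) (hψ s x)
    rw [hgdef]
    simpa [mul_comm, Function.comp_def] using h1
  have hFTC : ∀ (t x : ℝ), ∫ s in (0:ℝ)..t, g (ψ s x) = f (ψ t x) - f x := by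
    intro t x
    have h := intervalIntegral.integral_eq_sub_of_hasDerivAt (f := fun τ => f (ψ τ x))
      (f' := fun s => g (ψ s x)) (a := 0) (b := t)
      (fun s _ => hder s x) ((hgc.comp (hcont_s x)).intervalIntegrable 0 t)
    rw [h]
    show f (ψ t x) - f (ψ 0 x) = f (ψ t x) - f x
    rw [hψ0 x]
  rw [Metric.tendsto_nhdsWithin_nhds]
  intro ε hε
  have hkey := CompGen.strong_cont hlip hψ0 hψ hM0 hMb g hgc hg2
    (ENNReal.ofReal (ε/2)) (ENNReal.ofReal_pos.mpr (by linarith))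
  rw [Metric.eventually_nhds_iff] at hkey
  obtain ⟨δ, hδ0, hδ⟩ := hkey
  refine ⟨δ, hδ0, ?_⟩
  intro t ht hdist
  have ht0 : t ≠ 0 := ht
  rw [Real.dist_eq, sub_zero] at hdist ⊢
  set u : ℝ → ℝ → ℝ := fun s x => g (ψ s x) - g x with hu
  set Φ : ℝ → ℝ := fun x => ((f (ψ t x) - f x) / t - ξ x * deriv f x) ^ 2 with hΦ
  have hψtc : Continuous fun x => ψ t x := hjc.comp (Continuous.prodMk_right t)
  have hΦc : Continuous Φ := by
    rw [hΦ]
    exact ((((hf.continuous.comp hψtc).sub hf.continuous).div_const t).sub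
      ((hξ.continuous).mul hderivfc)).pow 2
  have hΦnn : 0 ≤ᵐ[volume] Φ := ae_of_all _ fun x => by rw [hΦ]; exact sq_nonneg _
  have hrepr : ∫ x, Φ x = (∫⁻ x, ENNReal.ofReal (Φ x)).toReal :=
    integral_eq_lintegral_of_nonneg_ae hΦnn hΦc.aestronglyMeasurable
  have hupt : ∀ x, Φ x = ((∫ s in (0:ℝ)..t, u s x) / t) ^ 2 := by
    intro x
    rw [hΦ]
    simp only []
    congr 1
    have hint1 : IntervalIntegrable (fun s => g (ψ s x)) volume 0 t :=
      (hgc.comp (hcont_s x)).intervalIntegrable 0 t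
    have hint2 : IntervalIntegrable (fun _ : ℝ => g x) volume 0 t :=
      intervalIntegrable_const
    rw [hu]
    simp only []
    rw [intervalIntegral.integral_sub hint1 hint2, intervalIntegral.integral_const,
      hFTC t x, smul_eq_mul, hgdef]
    simp only []
    field_simp
    ring
  set c : ℝ≥0∞ := ENNReal.ofReal |t| with hc
  have hc0 : c ≠ 0 := by
    rw [hc, Ne, ENNReal.ofReal_eq_zero, not_le]
    exact abs_pos.mpr ht0
  have hIoc : volume (Ι (0:ℝ) t) = c := by
    rw [Set.uIoc, Real.volume_Ioc, max_sub_min_eq_abs, sub_zero, hc]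
  set F : ℝ → ℝ → ℝ≥0∞ := fun x s => ((‖u s x‖₊ : ℝ≥0∞)) ^ (2:ℕ) with hF
  have hFm : Measurable (Function.uncurry F) := by
    have : Function.uncurry F =
        fun p : ℝ × ℝ => ((‖g (ψ p.2 p.1) - g p.1‖₊ : ℝ≥0∞)) ^ (2:ℕ) := rfl
    rw [this]
    have hcu : Continuous fun p : ℝ × ℝ => g (ψ p.2 p.1) - g p.1 :=
      (hgc.comp (hjc.comp (continuous_snd.prodMk continuous_fst))).sub
        (hgc.comp continuous_fst)
    exact (hcu.nnnorm.measurable.coe_nnreal_ennreal).pow_const 2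
  have hptb : ∀ x, ENNReal.ofReal (Φ x) ≤
      (∫⁻ s in Ι (0:ℝ) t, F x s) * c / (c * c) := by
    intro x
    rw [hupt x]
    have ht2 : (0:ℝ) < t^2 := by positivity
    have e0 : ((∫ s in (0:ℝ)..t, u s x) / t)^2 = (∫ s in (0:ℝ)..t, u s x)^2 / t^2 := by ring
    rw [e0, ENNReal.ofReal_div_of_pos ht2]
    have e1 : ENNReal.ofReal ((∫ s in (0:ℝ)..t, u s x)^2) =
        ((‖∫ s in (0:ℝ)..t, u s x‖₊ : ℝ≥0∞)) ^ (2:ℕ) := by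
      rw [← sq_abs, ← Real.norm_eq_abs, ENNReal.ofReal_pow (norm_nonneg _),
        ofReal_norm, enorm_eq_nnnorm]
    have e2 : ENNReal.ofReal (t^2) = c * c := by
      rw [hc, ← ENNReal.ofReal_mul (abs_nonneg t)]
      congr 1
      rw [abs_mul_abs_self, sq]
    rw [e1, e2]
    have hB : ((‖∫ s in (0:ℝ)..t, u s x‖₊ : ℝ≥0∞)) ≤
        ∫⁻ s in Ι (0:ℝ) t, ((‖u s x‖₊ : ℝ≥0∞)) := by
      rw [intervalIntegral.intervalIntegral_eq_integral_uIoc]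
      rcases le_or_gt (0:ℝ) t with h | h
      · rw [if_pos h, one_smul]
        exact enorm_integral_le_lintegral_enorm _
      · rw [if_neg (not_le.mpr h), neg_smul, one_smul, nnnorm_neg]
        exact enorm_integral_le_lintegral_enorm _
    have hwm : AEMeasurable (fun s => ((‖u s x‖₊ : ℝ≥0∞)))
        (volume.restrict (Ι (0:ℝ) t)) := by
      apply Continuous.aemeasurable
      exact ENNReal.continuous_coe.comp ((hgc.comp (hcont_s x)).sub continuous_const).nnnorm
    have hCS := CompGen.lint_sq_le (μ := volume.restrict (Ι (0:ℝ) t)) _ hwm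
    rw [Measure.restrict_apply_univ, hIoc] at hCS
    calc ((‖∫ s in (0:ℝ)..t, u s x‖₊ : ℝ≥0∞)) ^ (2:ℕ) / (c*c)
        ≤ (∫⁻ s in Ι (0:ℝ) t, ((‖u s x‖₊ : ℝ≥0∞))) ^ (2:ℕ) / (c*c) := by
          gcongr
      _ ≤ ((∫⁻ s in Ι (0:ℝ) t, F x s) * c) / (c*c) := by
          exact ENNReal.div_le_div_right hCS _
  have hswap := lintegral_lintegral_swap (μ := volume)
    (ν := volume.restrict (Ι (0:ℝ) t)) hFm.aemeasurable
  have hinner : Measurable fun x => ∫⁻ s in Ι (0:ℝ) t, F x s :=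
    hFm.lintegral_prod_right
  have hSbound : ∀ᵐ s ∂(volume.restrict (Ι (0:ℝ) t)),
      (∫⁻ x, F x s) ≤ ENNReal.ofReal (ε/2) := by
    rw [ae_restrict_iff' measurableSet_uIoc]
    apply ae_of_all
    intro s hs
    have habs : |s| ≤ |t| := by
      rcases Set.mem_uIoc.mp hs with ⟨h1, h2⟩ | ⟨h1, h2⟩ <;>
        cases abs_cases s <;> cases abs_cases t <;> linarith
    have := hδ (show dist s 0 < δ by rw [Real.dist_eq, sub_zero]; exact lt_of_le_of_lt habs hdist)
    exact this
  have hmain : (∫⁻ x, ENNReal.ofReal (Φ x)) ≤ ENNReal.ofReal (ε/2) := by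
    calc ∫⁻ x, ENNReal.ofReal (Φ x)
        ≤ ∫⁻ x, (∫⁻ s in Ι (0:ℝ) t, F x s) * c / (c*c) := lintegral_mono hptb
      _ = (∫⁻ x, ∫⁻ s in Ι (0:ℝ) t, F x s) * c / (c*c) := by
          simp only [ENNReal.div_eq_inv_mul]
          rw [lintegral_const_mul _ (hinner.mul_const c), lintegral_mul_const _ hinner]
      _ = (∫⁻ s in Ι (0:ℝ) t, ∫⁻ x, F x s) * c / (c*c) := by rw [hswap]
      _ ≤ (ENNReal.ofReal (ε/2) * c) * c / (c*c) := by
          have hstep : (∫⁻ s in Ι (0:ℝ) t, ∫⁻ x, F x s) ≤ ENNReal.ofReal (ε/2) * c := by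
            calc (∫⁻ s in Ι (0:ℝ) t, ∫⁻ x, F x s)
                ≤ ∫⁻ _ in Ι (0:ℝ) t, ENNReal.ofReal (ε/2) := lintegral_mono_ae hSbound
              _ = ENNReal.ofReal (ε/2) * c := by rw [setLIntegral_const, hIoc]
          exact ENNReal.div_le_div_right (mul_le_mul_left hstep c) _
      _ ≤ ENNReal.ofReal (ε/2) := by
          rw [mul_assoc, mul_div_assoc]
          calc ENNReal.ofReal (ε/2) * ((c*c)/(c*c)) ≤ ENNReal.ofReal (ε/2) * 1 := by
                gcongr
                exact ENNReal.div_self_le_one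
            _ = ENNReal.ofReal (ε/2) := mul_one _
  have hΦle : ∫ x, Φ x ≤ ε/2 := by
    rw [hrepr]
    exact ENNReal.toReal_le_of_le_ofReal (by linarith) hmain
  have hΦ0 : (0:ℝ) ≤ ∫ x, Φ x := integral_nonneg fun x => by rw [hΦ]; exact sq_nonneg _
  have hgoal : (∫ x, ((f (ψ t x) - f x) / t - ξ x * deriv f x) ^ 2) = ∫ x, Φ x := by
    rw [hΦ]
  rw [hgoal, abs_of_nonneg hΦ0]
  linarith
end

section
/- Let ξ : ℝ → ℝ be continuously differentiable with ξ and ξ′ bounded, let η : ℝ → ℝ be continuously differentiable with η and η′ bounded, let ψ be the flow of ξ∂_x, and set c(t,x) := ∫₀^t η(ψ(s,x)) ds. Then c is differentiable in t and in x, c(0,x) = 0, and ∂_t c(t,x) = ξ(x)·∂_x c(t,x) + η(x) for all t, x ∈ ℝ. -/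
open MeasureTheory

open Set intervalIntegral Filter
open scoped Topology

lemma flow_unique {ξ : ℝ → ℝ} {K : NNReal} (hl : LipschitzWith K ξ)
    {f g : ℝ → ℝ} (hf : ∀ t, HasDerivAt f (ξ (f t)) t)
    (hg : ∀ t, HasDerivAt g (ξ (g t)) t) (h0 : f 0 = g 0) : ∀ t, f t = g t := by
  intro t
  have hb : t ∈ Icc (-(|t| + 1)) (|t| + 1) := by
    constructor
    · nlinarith [abs_nonneg t, neg_abs_le t]
    · nlinarith [le_abs_self t]
  refine ODE_solution_unique_of_mem_Icc (v := fun _ => ξ) (s := fun _ => univ)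
    (fun _ _ => hl.lipschitzOnWith) (t₀ := 0) ?_ ?_ (fun s _ => hf s) (fun _ _ => trivial)
    ?_ (fun s _ => hg s) (fun _ _ => trivial) h0 hb
  · constructor
    · nlinarith [abs_nonneg t]
    · nlinarith [abs_nonneg t]
  · exact fun s _ => (hf s).continuousAt.continuousWithinAt
  · exact fun s _ => (hg s).continuousAt.continuousWithinAt

lemma flow_fixed {ξ : ℝ → ℝ} {K : NNReal} (hl : LipschitzWith K ξ) {ψ : ℝ → ℝ → ℝ}
    (hψ0 : ∀ x, ψ 0 x = x) (hψ : ∀ t x, HasDerivAt (fun s => ψ s x) (ξ (ψ t x)) t)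
    {x : ℝ} (hx : ξ x = 0) : ∀ s, ψ s x = x := by
  have := flow_unique hl (f := fun s => ψ s x) (g := fun _ => x) (hψ · x)
    (fun t => by simpa [hx] using hasDerivAt_const t x) (hψ0 x)
  simpa using this

lemma flow_group {ξ : ℝ → ℝ} {K : NNReal} (hl : LipschitzWith K ξ) {ψ : ℝ → ℝ → ℝ}
    (hψ0 : ∀ x, ψ 0 x = x) (hψ : ∀ t x, HasDerivAt (fun s => ψ s x) (ξ (ψ t x)) t)
    (x h : ℝ) : ∀ s, ψ (s + h) x = ψ s (ψ h x) := by
  refine flow_unique hl (f := fun s => ψ (s + h) x) (g := fun s => ψ s (ψ h x)) ?_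
    (hψ · (ψ h x)) (by simp [hψ0])
  intro s
  have := (hψ (s + h) x).comp s ((hasDerivAt_id s).add_const h)
  simpa [Function.comp_def] using this

lemma modulus_C1 {f : ℝ → ℝ} (hf : ContDiff ℝ 1 f) (x : ℝ) {ε : ℝ} (hε : 0 < ε) :
    ∃ δ > 0, ∀ z, |z - x| ≤ δ → |f z - f x - deriv f x * (z - x)| ≤ ε * |z - x| := by
  obtain ⟨hdiff, hcd⟩ := contDiff_one_iff_deriv.mp hf
  obtain ⟨δ, hδ, hd⟩ := Metric.continuousAt_iff.mp hcd.continuousAt ε hε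
  refine ⟨δ / 2, by positivity, fun z hz => ?_⟩
  have key : ∀ u ∈ Metric.closedBall x (δ / 2),
      ‖deriv (fun w => f w - deriv f x * w) u‖ ≤ ε := by
    intro u hu
    have : deriv (fun w => f w - deriv f x * w) u = deriv f u - deriv f x := by
      have h := ((hdiff u).hasDerivAt.sub (((hasDerivAt_id u).const_mul (deriv f x)))).deriv
      simp only [id, mul_one] at h
      exact h
    rw [this, Real.norm_eq_abs]
    rcases eq_or_ne u x with rfl | hne
    · simp [hε.le]
    · have : dist u x < δ := by
        rw [Real.dist_eq]
        have := Metric.mem_closedBall.mp hu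
        rw [Real.dist_eq] at this
        linarith [hδ]
      exact le_of_lt (by simpa [Real.dist_eq] using hd this)
  have := Convex.norm_image_sub_le_of_norm_deriv_le
    (f := fun w => f w - deriv f x * w) (s := Metric.closedBall x (δ / 2))
    (fun u _ => (hdiff u).sub (by fun_prop)) key (convex_closedBall x (δ / 2))
    (Metric.mem_closedBall_self (by positivity))
    (by simpa [Metric.mem_closedBall, Real.dist_eq] using hz)
  rw [Real.norm_eq_abs, Real.norm_eq_abs] at this
  calc |f z - f x - deriv f x * (z - x)|
      = |f z - deriv f x * z - (f x - deriv f x * x)| := by ring_nf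
    _ ≤ ε * |z - x| := this

lemma exp_sub_one_le (z : ℝ) (hz : 0 ≤ z) : Real.exp z - 1 ≤ z * Real.exp z := by
  have h1 : Real.exp (-z) * Real.exp z = 1 := by rw [← Real.exp_add]; simp
  nlinarith [mul_le_mul_of_nonneg_right (Real.add_one_le_exp (-z)) (Real.exp_pos z).le, h1]


set_option maxHeartbeats 1000000 in
lemma key_diff {ξ η : ℝ → ℝ} {ψ : ℝ → ℝ → ℝ} {K : NNReal} (hl : LipschitzWith K ξ)
    (hξ : ContDiff ℝ 1 ξ) (hη : ContDiff ℝ 1 η)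
    (hψ0 : ∀ x, ψ 0 x = x) (hψ : ∀ t x, HasDerivAt (fun s => ψ s x) (ξ (ψ t x)) t)
    {x : ℝ} (hx : ξ x = 0) {t : ℝ} (ht : 0 ≤ t) :
    DifferentiableAt ℝ (fun y => ∫ s in (0:ℝ)..t, η (ψ s y)) x := by
  set a := deriv ξ x with ha
  set b := deriv η x with hb
  set Kr : ℝ := (K : ℝ) with hKr
  have hKr0 : 0 ≤ Kr := K.coe_nonneg
  set K2 : ℝ := Kr + |a| + 1 with hK2
  have hK2pos : 0 < K2 := by positivity
  have hfix : ∀ s, ψ s x = x := flow_fixed hl hψ0 hψ hx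
  have hψd : ∀ y, Differentiable ℝ (fun s => ψ s y) := fun y s => (hψ s y).differentiableAt
  have hcont : ∀ y, Continuous fun s => η (ψ s y) :=
    fun y => hη.continuous.comp (hψd y).continuous
  -- Grönwall estimate
  have gron1 : ∀ y, ∀ s ∈ Icc (0:ℝ) t, |ψ s y - x| ≤ |y - x| * Real.exp (Kr * s) := by
    intro y s hs
    have hgw := norm_le_gronwallBound_of_norm_deriv_right_le
      (f := fun s => ψ s y - x) (f' := fun s => ξ (ψ s y)) (δ := |y - x|) (K := Kr) (ε := 0)
      (a := 0) (b := t)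
      (((hψd y).continuous.sub continuous_const).continuousOn)
      (fun u _ => ((hψ u y).sub_const x).hasDerivWithinAt)
      (by simp [Real.norm_eq_abs, hψ0]) ?_ s hs
    · simpa [Real.norm_eq_abs, gronwallBound_ε0] using hgw
    · intro u _
      have := hl.dist_le_mul (ψ u y) x
      rw [Real.dist_eq, Real.dist_eq] at this
      simp only [Real.norm_eq_abs, add_zero]
      calc |ξ (ψ u y)| = |ξ (ψ u y) - ξ x| := by rw [hx, sub_zero]
        _ ≤ Kr * |ψ u y - x| := this
  -- candidate derivative
  set d : ℝ := b * ∫ s in (0:ℝ)..t, Real.exp (a * s) with hd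
  rw [show (fun y => ∫ s in (0:ℝ)..t, η (ψ s y)) =
      (fun y => ∫ s in (0:ℝ)..t, η (ψ s y)) from rfl]
  refine (HasDerivAt.differentiableAt (f' := d) ?_)
  rw [hasDerivAt_iff_isLittleO, Asymptotics.isLittleO_iff]
  intro C hC
  set C₀ : ℝ := Real.exp (Kr * t) * (1 + |b| * (t * Real.exp (K2 * t))) with hC₀
  have hC₀0 : 0 ≤ C₀ := by positivity
  set ε : ℝ := C / (C₀ * t + 1) with hε
  have hεpos : 0 < ε := div_pos hC (by positivity)
  obtain ⟨δ₁, hδ₁, hmξ⟩ := modulus_C1 hξ x hεpos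
  obtain ⟨δ₂, hδ₂, hmη⟩ := modulus_C1 hη x hεpos
  set δ : ℝ := min δ₁ δ₂ with hδdef
  have hδpos : 0 < δ := lt_min hδ₁ hδ₂
  set r : ℝ := δ * Real.exp (-(Kr * t)) with hr
  have hrpos : 0 < r := by positivity
  filter_upwards [Metric.closedBall_mem_nhds x hrpos] with y hy
  rw [Metric.mem_closedBall, Real.dist_eq] at hy
  -- bound |ψ s y - x| ≤ δ on [0,t]
  have hψδ : ∀ s ∈ Icc (0:ℝ) t, |ψ s y - x| ≤ δ := by
    intro s hs
    calc |ψ s y - x| ≤ |y - x| * Real.exp (Kr * s) := gron1 y s hs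
      _ ≤ r * Real.exp (Kr * t) := by
          apply mul_le_mul hy (Real.exp_le_exp.mpr (by nlinarith [hs.2])) (Real.exp_pos _).le
          linarith [abs_nonneg (y - x)]
      _ = δ := by rw [hr, mul_assoc, ← Real.exp_add]; simp
  have hψKr : ∀ s ∈ Icc (0:ℝ) t, |ψ s y - x| ≤ |y - x| * Real.exp (Kr * t) := by
    intro s hs
    calc |ψ s y - x| ≤ |y - x| * Real.exp (Kr * s) := gron1 y s hs
      _ ≤ |y - x| * Real.exp (Kr * t) :=
        mul_le_mul_of_nonneg_left (Real.exp_le_exp.mpr (by nlinarith [hs.2])) (abs_nonneg _)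
  -- comparison function w
  set w : ℝ → ℝ := fun s => ψ s y - x - (y - x) * Real.exp (a * s) with hw
  have hw' : ∀ s, HasDerivAt w (ξ (ψ s y) - (y - x) * (Real.exp (a * s) * a)) s := by
    intro s
    have h1 : HasDerivAt (fun s : ℝ => a * s) a s := by
      simpa using (hasDerivAt_id s).const_mul a
    have hexp : HasDerivAt (fun s => Real.exp (a * s)) (Real.exp (a * s) * a) s :=
      (Real.hasDerivAt_exp (a * s)).comp s h1
    exact ((hψ s y).sub_const x).sub (hexp.const_mul (y - x))
  set ε₂ : ℝ := ε * (|y - x| * Real.exp (Kr * t)) with hε₂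
  have hε₂0 : 0 ≤ ε₂ := by positivity
  have gron2 : ∀ s ∈ Icc (0:ℝ) t, |w s| ≤ ε₂ * (t * Real.exp (K2 * t)) := by
    intro s hs
    have hgw := norm_le_gronwallBound_of_norm_deriv_right_le
      (f := w) (f' := fun s => ξ (ψ s y) - (y - x) * (Real.exp (a * s) * a))
      (δ := 0) (K := K2) (ε := ε₂) (a := 0) (b := t)
      (Continuous.continuousOn (((hψd y).continuous.sub continuous_const).sub
        (continuous_const.mul (Real.continuous_exp.comp (continuous_const.mul continuous_id)))))
      (fun u _ => (hw' u).hasDerivWithinAt)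
      (by simp [hw, hψ0]) ?_ s hs
    · have hKne : K2 ≠ 0 := ne_of_gt hK2pos
      rw [gronwallBound_of_K_ne_0 hKne] at hgw
      have h1 : Real.exp (K2 * (s - 0)) - 1 ≤ K2 * t * Real.exp (K2 * t) := by
        have hz : 0 ≤ K2 * (s - 0) := by nlinarith [hs.1]
        calc Real.exp (K2 * (s - 0)) - 1 ≤ K2 * (s - 0) * Real.exp (K2 * (s - 0)) :=
              exp_sub_one_le _ hz
          _ ≤ K2 * t * Real.exp (K2 * t) := by
              apply mul_le_mul (by nlinarith [hs.1, hs.2])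
                (Real.exp_le_exp.mpr (by nlinarith [hs.1, hs.2])) (Real.exp_pos _).le
              nlinarith [hs.1, hs.2, Real.exp_pos (K2 * t)]
      rw [Real.norm_eq_abs] at hgw
      calc |w s| ≤ 0 * Real.exp (K2 * (s - 0)) + ε₂ / K2 * (Real.exp (K2 * (s - 0)) - 1) :=
            hgw
        _ ≤ ε₂ / K2 * (K2 * t * Real.exp (K2 * t)) := by
            rw [zero_mul, zero_add]
            apply mul_le_mul_of_nonneg_left h1 (by positivity)
        _ = ε₂ * (t * Real.exp (K2 * t)) := by field_simp
    · -- derivative bound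
      intro u hu
      have huI : u ∈ Icc (0:ℝ) t := ⟨hu.1, hu.2.le⟩
      have hsplit : ξ (ψ u y) - (y - x) * (Real.exp (a * u) * a) =
          a * w u + (ξ (ψ u y) - a * (ψ u y - x)) := by
        simp only [hw]; ring
      rw [Real.norm_eq_abs]
      show |ξ (ψ u y) - (y - x) * (Real.exp (a * u) * a)| ≤ K2 * ‖w u‖ + ε₂
      rw [hsplit]
      have h1 : |ξ (ψ u y) - a * (ψ u y - x)| ≤ ε * |ψ u y - x| := by
        have := hmξ (ψ u y) (le_trans (hψδ u huI) (min_le_left _ _))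
        rw [hx, sub_zero] at this
        exact this
      calc |a * w u + (ξ (ψ u y) - a * (ψ u y - x))|
          ≤ |a * w u| + |ξ (ψ u y) - a * (ψ u y - x)| := abs_add_le _ _
        _ ≤ |a| * |w u| + ε * |ψ u y - x| := by
            rw [abs_mul]
            exact add_le_add le_rfl h1
        _ ≤ K2 * ‖w u‖ + ε₂ := by
            rw [Real.norm_eq_abs, hε₂]
            have h2 : ε * |ψ u y - x| ≤ ε * (|y - x| * Real.exp (Kr * t)) :=
              mul_le_mul_of_nonneg_left (hψKr u huI) hεpos.le
            have h3 : |a| * |w u| ≤ K2 * |w u| := by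
              apply mul_le_mul_of_nonneg_right _ (abs_nonneg _)
              rw [hK2]; linarith [abs_nonneg a]
            linarith
  -- final estimate
  have i1 : IntervalIntegrable (fun s => η (ψ s y)) volume 0 t :=
    (hcont y).intervalIntegrable _ _
  have i2 : IntervalIntegrable (fun _ : ℝ => η x) volume 0 t :=
    intervalIntegrable_const
  have i3 : IntervalIntegrable (fun s => b * (y - x) * Real.exp (a * s)) volume 0 t :=
    (continuous_const.mul (Real.continuous_exp.comp
      (continuous_const.mul continuous_id))).intervalIntegrable _ _
  have e1 : (∫ s in (0:ℝ)..t, η (ψ s x)) = ∫ s in (0:ℝ)..t, η x :=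
    intervalIntegral.integral_congr (fun s _ => by rw [hfix s])
  have e2 : (y - x) • d = ∫ s in (0:ℝ)..t, b * (y - x) * Real.exp (a * s) := by
    have := intervalIntegral.integral_const_mul (μ := volume) (a := (0:ℝ)) (b := t)
      (b * (y - x)) (fun s => Real.exp (a * s))
    rw [smul_eq_mul, hd]
    rw [show (fun s => b * (y - x) * Real.exp (a * s)) =
      (fun s => b * (y - x) * (fun s => Real.exp (a * s)) s) from rfl, this]
    ring
  have hE : (∫ s in (0:ℝ)..t, η (ψ s y)) - (∫ s in (0:ℝ)..t, η (ψ s x)) - (y - x) • d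
      = ∫ s in (0:ℝ)..t, (η (ψ s y) - η x - b * (y - x) * Real.exp (a * s)) := by
    rw [e1, e2, ← intervalIntegral.integral_sub i1 i2,
      ← intervalIntegral.integral_sub (i1.sub i2) i3]
  show ‖(∫ s in (0:ℝ)..t, η (ψ s y)) - (∫ s in (0:ℝ)..t, η (ψ s x)) - (y - x) • d‖
      ≤ C * ‖y - x‖
  rw [hE]
  have hbound : ∀ s ∈ uIoc (0:ℝ) t,
      ‖η (ψ s y) - η x - b * (y - x) * Real.exp (a * s)‖ ≤ ε * |y - x| * C₀ := by
    intro s hsI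
    have hsIcc : s ∈ Icc (0:ℝ) t := by
      rw [uIoc_of_le ht] at hsI
      exact ⟨hsI.1.le, hsI.2⟩
    have hsplit2 : η (ψ s y) - η x - b * (y - x) * Real.exp (a * s)
        = (η (ψ s y) - η x - b * (ψ s y - x)) + b * w s := by
      simp only [hw]; ring
    rw [Real.norm_eq_abs, hsplit2]
    have h1 : |η (ψ s y) - η x - b * (ψ s y - x)| ≤ ε * (|y - x| * Real.exp (Kr * t)) := by
      have := hmη (ψ s y) (le_trans (hψδ s hsIcc) (min_le_right _ _))
      exact le_trans this (mul_le_mul_of_nonneg_left (hψKr s hsIcc) hεpos.le)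
    have h2 : |b * w s| ≤ |b| * (ε₂ * (t * Real.exp (K2 * t))) := by
      rw [abs_mul]
      exact mul_le_mul_of_nonneg_left (gron2 s hsIcc) (abs_nonneg b)
    calc |(η (ψ s y) - η x - b * (ψ s y - x)) + b * w s|
        ≤ |η (ψ s y) - η x - b * (ψ s y - x)| + |b * w s| := abs_add_le _ _
      _ ≤ ε * (|y - x| * Real.exp (Kr * t)) + |b| * (ε₂ * (t * Real.exp (K2 * t))) :=
          add_le_add h1 h2
      _ = ε * |y - x| * C₀ := by rw [hε₂, hC₀]; ring
  have := intervalIntegral.norm_integral_le_of_norm_le_const hbound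
  have hεC : ε * C₀ * t ≤ C := by
    have h0 : (0:ℝ) < C₀ * t + 1 := by positivity
    have : ε * (C₀ * t + 1) = C := by
      rw [hε]; field_simp
    nlinarith [hεpos]
  calc ‖∫ s in (0:ℝ)..t, (η (ψ s y) - η x - b * (y - x) * Real.exp (a * s))‖
      ≤ ε * |y - x| * C₀ * |t - 0| := this
    _ = (ε * C₀ * t) * |y - x| := by rw [sub_zero, abs_of_nonneg ht]; ring
    _ ≤ C * ‖y - x‖ := by
        rw [Real.norm_eq_abs]
        exact mul_le_mul_of_nonneg_right hεC (abs_nonneg _)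

/-- The weight `c(t,x) = ∫₀ᵗ η(ψ(s,x)) ds` is differentiable in `t` and in
`x`, vanishes at `t = 0`, and satisfies `∂ₜc = ξ·∂ₓc + η`. -/
theorem weight_transport_equation (ξ η : ℝ → ℝ) (ψ : ℝ → ℝ → ℝ)
    (c : ℝ → ℝ → ℝ)
    (hξ : ContDiff ℝ 1 ξ)
    (hξb : ∃ M, ∀ x, |ξ x| ≤ M) (hξ'b : ∃ M, ∀ x, |deriv ξ x| ≤ M)
    (hη : ContDiff ℝ 1 η)
    (hηb : ∃ M, ∀ x, |η x| ≤ M) (hη'b : ∃ M, ∀ x, |deriv η x| ≤ M)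
    (hψ0 : ∀ x : ℝ, ψ 0 x = x)
    (hψ : ∀ (t x : ℝ), HasDerivAt (fun s => ψ s x) (ξ (ψ t x)) t)
    (hc : ∀ (t x : ℝ), c t x = ∫ s in (0:ℝ)..t, η (ψ s x)) :
    (∀ x : ℝ, c 0 x = 0) ∧
    (∀ (t x : ℝ), DifferentiableAt ℝ (fun s => c s x) t) ∧
    (∀ (t x : ℝ), DifferentiableAt ℝ (fun y => c t y) x) ∧
    (∀ (t x : ℝ),
      deriv (fun s => c s x) t = ξ x * deriv (fun y => c t y) x + η x) := by
  obtain ⟨M, hM⟩ := hξ'b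
  set K : NNReal := Real.toNNReal M with hK
  have hlip : LipschitzWith K ξ := by
    apply lipschitzWith_of_nnnorm_deriv_le (hξ.differentiable one_ne_zero)
    intro z
    rw [← NNReal.coe_le_coe, coe_nnnorm, Real.coe_toNNReal', Real.norm_eq_abs]
    exact le_max_of_le_left (hM z)
  have hψd : ∀ y, Differentiable ℝ (fun s => ψ s y) := fun y s => (hψ s y).differentiableAt
  have hcont : ∀ y, Continuous fun s => η (ψ s y) :=
    fun y => (hη.continuous).comp (hψd y).continuous
  have hii : ∀ (a b y : ℝ), IntervalIntegrable (fun s => η (ψ s y)) volume a b :=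
    fun a b y => (hcont y).intervalIntegrable a b
  -- time derivative
  have hdt : ∀ t x, HasDerivAt (fun s => c s x) (η (ψ t x)) t := by
    intro t x
    have : (fun s => c s x) = fun s => ∫ u in (0:ℝ)..s, η (ψ u x) :=
      funext fun s => hc s x
    rw [this]
    exact intervalIntegral.integral_hasDerivAt_right (hii 0 t x)
      ((hcont x).stronglyMeasurableAtFilter _ _) (hcont x).continuousAt
  -- cocycle
  have hcoc : ∀ (t h x : ℝ), c t (ψ h x) = c (t + h) x - c h x := by
    intro t h x
    have h1 : c t (ψ h x) = ∫ s in (0:ℝ)..t, η (ψ (s + h) x) := by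
      rw [hc]
      exact intervalIntegral.integral_congr
        (fun s _ => by rw [flow_group hlip hψ0 hψ x h s])
    have h2 : (∫ s in (0:ℝ)..t, η (ψ (s + h) x)) = ∫ s in h..(t + h), η (ψ s x) := by
      have := intervalIntegral.integral_comp_add_right (a := (0:ℝ)) (b := t)
        (fun s => η (ψ s x)) h
      simpa using this
    have h3 : c h x + ∫ s in h..(t + h), η (ψ s x) = c (t + h) x := by
      rw [hc h x, hc (t + h) x]
      exact intervalIntegral.integral_add_adjacent_intervals (hii 0 h x) (hii h (t + h) x)
    rw [h1, h2]
    linarith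
  -- main combined claim
  have main : ∀ t x, DifferentiableAt ℝ (fun y => c t y) x ∧
      deriv (fun s => c s x) t = ξ x * deriv (fun y => c t y) x + η x := by
    intro t x
    by_cases hx0 : ξ x = 0
    · -- fixed-point case
      have hfix := flow_fixed hlip hψ0 hψ hx0
      have hdiffx : DifferentiableAt ℝ (fun y => c t y) x := by
        rcases le_or_gt 0 t with ht | ht
        · have := key_diff hlip hξ hη hψ0 hψ hx0 ht
          have heq : (fun y => c t y) = fun y => ∫ s in (0:ℝ)..t, η (ψ s y) :=
            funext fun y => hc t y
          rw [heq]; exact this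
        · -- reverse time
          set ξ' : ℝ → ℝ := fun z => -ξ z with hξ'def
          set ψ' : ℝ → ℝ → ℝ := fun s y => ψ (-s) y with hψ'def
          have hlip' : LipschitzWith K ξ' := by
            have : ξ' = (fun z : ℝ => -z) ∘ ξ := rfl
            rw [this, ← one_mul K]
            exact (LipschitzWith.id.neg).comp hlip
          have hψ0' : ∀ y, ψ' 0 y = y := fun y => by simp [hψ'def, hψ0]
          have hψ' : ∀ s y, HasDerivAt (fun u => ψ' u y) (ξ' (ψ' s y)) s := by
            intro s y
            have := (hψ (-s) y).comp s (hasDerivAt_neg s)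
            simpa [hψ'def, hξ'def, Function.comp_def] using this
          have hx0' : ξ' x = 0 := by simp [hξ'def, hx0]
          have hkd := key_diff hlip' hξ.neg hη hψ0' hψ' hx0' (by linarith : (0:ℝ) ≤ -t)
          have heq : (fun y => c t y) = fun y => -(∫ s in (0:ℝ)..(-t), η (ψ' s y)) := by
            funext y
            have h2 : (∫ s in (0:ℝ)..(-t), η (ψ (-s) y)) = ∫ s in t..(0:ℝ), η (ψ s y) := by
              simpa using intervalIntegral.integral_comp_neg (a := (0:ℝ)) (b := -t)
                (fun s => η (ψ s y))
            rw [hc t y, hψ'def]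
            simp only []
            rw [h2, intervalIntegral.integral_symm]
          rw [heq]
          exact hkd.neg
      refine ⟨hdiffx, ?_⟩
      rw [(hdt t x).deriv, hfix t, hx0]
      ring
    · -- non-degenerate case: local inverse of the flow
      set φ : ℝ → ℝ := fun h => ψ h x with hφdef
      have hφC1 : ContDiff ℝ 1 φ := by
        rw [contDiff_one_iff_deriv]
        refine ⟨hψd x, ?_⟩
        have : deriv φ = fun h => ξ (φ h) := funext fun h => (hψ h x).deriv
        rw [this]
        exact hξ.continuous.comp (hψd x).continuous
      have hφ0 : φ 0 = x := hψ0 x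
      have hstrict : HasStrictDerivAt φ (ξ x) 0 := by
        have h := (hφC1.contDiffAt (x := (0:ℝ))).hasStrictDerivAt one_ne_zero
        rwa [(hψ 0 x).deriv, hψ0 x] at h
      set φinv : ℝ → ℝ := hstrict.localInverse φ (ξ x) 0 hx0 with hφinv
      have hinv_strict : HasStrictDerivAt φinv (ξ x)⁻¹ x := by
        have := hstrict.to_localInverse (hf' := hx0)
        rwa [hφ0] at this
      have hinv0 : φinv x = 0 := by
        have := (hstrict.hasStrictFDerivAt_equiv hx0).localInverse_apply_image
        rwa [hφ0] at this
      have hright : ∀ᶠ y in 𝓝 x, φ (φinv y) = y := by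
        have := (hstrict.hasStrictFDerivAt_equiv hx0).eventually_right_inverse
        rwa [hφ0] at this
      set g : ℝ → ℝ := fun h => c (t + h) x - c h x with hgdef
      have hgd : HasDerivAt g (η (ψ t x) - η x) 0 := by
        have h1 : HasDerivAt (fun h => c (t + h) x) (η (ψ t x)) 0 := by
          have := (hdt (t + 0) x).comp 0 ((hasDerivAt_id 0).const_add t)
          simpa [Function.comp_def] using this
        have h2 : HasDerivAt (fun h => c h x) (η x) 0 := by
          have := hdt 0 x
          rwa [hψ0 x] at this
        exact h1.sub h2
      have heq : (fun y => c t y) =ᶠ[𝓝 x] fun y => g (φinv y) := by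
        filter_upwards [hright] with y hy
        have : c t (ψ (φinv y) x) = c (t + φinv y) x - c (φinv y) x := hcoc t (φinv y) x
        rw [hgdef]
        simp only []
        rw [← this]
        congr 1
        exact hy.symm
      have hcomp : HasDerivAt (fun y => g (φinv y)) ((η (ψ t x) - η x) * (ξ x)⁻¹) x := by
        have hgd' : HasDerivAt g (η (ψ t x) - η x) (φinv x) := by rwa [hinv0]
        exact hgd'.comp x hinv_strict.hasDerivAt
      have hder : HasDerivAt (fun y => c t y) ((η (ψ t x) - η x) * (ξ x)⁻¹) x :=
        hcomp.congr_of_eventuallyEq heq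
      refine ⟨hder.differentiableAt, ?_⟩
      rw [(hdt t x).deriv, hder.deriv]
      field_simp
      ring
  refine ⟨?_, ?_, ?_, ?_⟩
  · intro x; rw [hc]; simp
  · exact fun t x => (hdt t x).differentiableAt
  · exact fun t x => (main t x).1
  · exact fun t x => (main t x).2
end

section
/- Let ξ : ℝ → ℝ be twice continuously differentiable with ξ, ξ′, ξ″ bounded, let η : ℝ → ℝ be twice continuously differentiable with η, η′, η″ bounded, let ψ be the flow of ξ∂_x, let a₀ : ℝ → ℝ be continuously differentiable and bounded with bounded derivative, and let b₀ : ℝ → ℝ be continuously differentiable. Set a(t,x) := a₀(ψ(t,x))·exp(−∫₀^t ξ′(ψ(s,x)) ds) and define b(t,x) := b₀(ψ(t,x)) − ∫₀^t η′(ψ(t−τ, x))·a(τ, ψ(t−τ, x)) dτ. Then b(0,x) = b₀(x) and b satisfies ∂_t b(t,x) = ξ(x)·∂_x b(t,x) − η′(x)·a(t,x) for all t, x ∈ ℝ. -/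
open MeasureTheory Set intervalIntegral

/-- Global uniqueness for autonomous Lipschitz ODE. -/
lemma ode_unique_global {v : ℝ → ℝ} {K : NNReal} (hv : LipschitzWith K v)
    {f g : ℝ → ℝ} (hf : ∀ t, HasDerivAt f (v (f t)) t)
    (hg : ∀ t, HasDerivAt g (v (g t)) t) (h0 : f 0 = g 0) (t : ℝ) : f t = g t := by
  have ht : t ∈ Ioo (-(|t|+1)) (|t|+1) := by
    constructor <;> cases abs_cases t <;> nlinarith [abs_nonneg t]
  have h0' : (0:ℝ) ∈ Ioo (-(|t|+1)) (|t|+1) := by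
    constructor <;> nlinarith [abs_nonneg t]
  exact ODE_solution_unique_of_mem_Ioo (v := fun _ => v) (s := fun _ => Set.univ)
    (fun _ _ => hv.lipschitzOnWith) h0'
    (fun s _ => ⟨hf s, trivial⟩) (fun s _ => ⟨hg s, trivial⟩) h0 ht

/-- Two-sided Grönwall inequality wrapper. -/
lemma gronwall_abs {f f' : ℝ → ℝ} (hf : ∀ s, HasDerivAt f (f' s) s)
    {δ K ε T : ℝ} (h0 : |f 0| ≤ δ)
    (hb : ∀ s, |s| ≤ T → |f' s| ≤ K * |f s| + ε)
    {t : ℝ} (hT : |t| ≤ T) : |f t| ≤ gronwallBound δ K ε |t| := by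
  rcases le_or_gt 0 t with h | h
  · have := norm_le_gronwallBound_of_norm_deriv_right_le (a := 0) (b := t)
      (f := f) (f' := f') (δ := δ) (K := K) (ε := ε)
      (fun s _ => (hf s).continuousAt.continuousWithinAt)
      (fun s _ => (hf s).hasDerivWithinAt)
      (by simpa using h0)
      (fun s hs => by
        have hsabs : |s| ≤ T := by
          rw [abs_of_nonneg hs.1]; exact le_trans (le_of_lt hs.2) (le_trans (le_abs_self t) hT)
        simpa [Real.norm_eq_abs] using hb s hsabs)
      t ⟨h, le_refl t⟩
    simpa [Real.norm_eq_abs, abs_of_nonneg h] using this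
  · have hg : ∀ s, HasDerivAt (fun u => f (-u)) (-(f' (-s))) s := by
      intro s
      simpa [Function.comp_def] using (hf (-s)).comp s (hasDerivAt_neg s)
    have := norm_le_gronwallBound_of_norm_deriv_right_le (a := 0) (b := -t)
      (f := fun u => f (-u)) (f' := fun u => -(f' (-u))) (δ := δ) (K := K) (ε := ε)
      (fun s _ => (hg s).continuousAt.continuousWithinAt)
      (fun s _ => (hg s).hasDerivWithinAt)
      (by simpa using h0)
      (fun s hs => by
        have hsabs : |(-s)| ≤ T := by
          rw [abs_neg, abs_of_nonneg hs.1]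
          exact le_trans (le_of_lt hs.2) (le_trans (neg_le_abs t) hT)
        simpa [Real.norm_eq_abs] using hb (-s) hsabs)
      (-t) ⟨by linarith, le_refl _⟩
    simpa [Real.norm_eq_abs, abs_of_neg h] using this

/-- Differentiation under the interval integral, constant bound version. -/
lemma param_hasDerivAt {G G' : ℝ → ℝ → ℝ} {x₀ a b C : ℝ}
    (hG : ∀ x, Continuous (fun s => G x s))
    (hG' : Continuous (fun s => G' x₀ s))
    (hC : ∀ x s, s ∈ Set.uIoc a b → |G' x s| ≤ C)
    (hd : ∀ s x, HasDerivAt (fun y => G y s) (G' x s) x) :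
    HasDerivAt (fun x => ∫ s in a..b, G x s) (∫ s in a..b, G' x₀ s) x₀ := by
  refine (intervalIntegral.hasDerivAt_integral_of_dominated_loc_of_deriv_le
    (F := G) (F' := G') (x₀ := x₀) (a := a) (b := b) (bound := fun _ => C)
    (s := Set.univ) Filter.univ_mem ?_ ?_ ?_ ?_ ?_ ?_).2
  · exact Filter.Eventually.of_forall fun x => (hG x).aestronglyMeasurable
  · exact (hG x₀).intervalIntegrable _ _
  · exact hG'.aestronglyMeasurable
  · exact Filter.Eventually.of_forall fun s hs x _ => by
      simpa [Real.norm_eq_abs] using hC x s hs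
  · exact intervalIntegrable_const
  · exact Filter.Eventually.of_forall fun s _ x _ => hd s x

/-- Quadratic Taylor remainder bound from a bound on the second derivative. -/
lemma taylor_bound {ξ : ℝ → ℝ} (hξ : ContDiff ℝ 2 ξ) {M : ℝ}
    (hM : ∀ x, |deriv (deriv ξ) x| ≤ M) (p q : ℝ) :
    |ξ q - ξ p - deriv ξ p * (q - p)| ≤ M * (q - p) ^ 2 := by
  have hξd : Differentiable ℝ ξ := hξ.differentiable two_ne_zero
  have hξ' : ContDiff ℝ 1 (deriv ξ) := by
    have := (contDiff_succ_iff_deriv (n := 1)).mp (by exact_mod_cast hξ)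
    exact this.2.2
  have hξ'd : Differentiable ℝ (deriv ξ) := hξ'.differentiable one_ne_zero
  set g : ℝ → ℝ := fun z => ξ z - ξ p - deriv ξ p * (z - p) with hg
  have hgd : ∀ z, HasDerivAt g (deriv ξ z - deriv ξ p) z := by
    intro z
    have h1 := (hξd z).hasDerivAt
    have h2 : HasDerivAt (fun z : ℝ => ξ p + deriv ξ p * (z - p)) (deriv ξ p) z := by
      simpa using (((hasDerivAt_id z).sub_const p).const_mul (deriv ξ p)).const_add (ξ p)
    simpa [hg, sub_sub, Pi.sub_def] using h1.sub h2
  have hlip : LipschitzWith (Real.toNNReal M) (deriv ξ) := by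
    apply lipschitzWith_of_nnnorm_deriv_le hξ'd
    intro x
    rw [← NNReal.coe_le_coe]
    have hM0 : 0 ≤ M := le_trans (abs_nonneg _) (hM x)
    simpa [coe_nnnorm, Real.norm_eq_abs, Real.coe_toNNReal M hM0] using hM x
  have key : ∀ z ∈ Set.uIcc p q, ‖deriv ξ z - deriv ξ p‖ ≤ M * |q - p| := by
    intro z hz
    have h1 : dist (deriv ξ z) (deriv ξ p) ≤ M * dist z p := by
      have := hlip.dist_le_mul z p
      have hM0 : 0 ≤ M := le_trans (abs_nonneg _) (hM p)
      simpa [Real.coe_toNNReal M hM0] using this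
    have h2 : dist z p ≤ dist q p := by
      rw [Real.dist_eq, Real.dist_eq]
      exact abs_sub_left_of_mem_uIcc hz
    rw [Real.norm_eq_abs, ← Real.dist_eq]
    calc dist (deriv ξ z) (deriv ξ p) ≤ M * dist z p := h1
    _ ≤ M * dist q p := by
        have hM0 : 0 ≤ M := le_trans (abs_nonneg _) (hM p)
        exact mul_le_mul_of_nonneg_left h2 hM0
    _ = M * |q - p| := by rw [Real.dist_eq]
  have hmain := Convex.norm_image_sub_le_of_norm_hasDerivWithin_le
    (f := g) (f' := fun z => deriv ξ z - deriv ξ p) (C := M * |q - p|) (s := Set.uIcc p q)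
    (fun z _ => (hgd z).hasDerivWithinAt) key (convex_uIcc p q)
    Set.left_mem_uIcc Set.right_mem_uIcc
  have hgp : g p = 0 := by simp [hg]
  have : ‖g q - g p‖ ≤ M * |q - p| * ‖q - p‖ := hmain
  rw [hgp, sub_zero, Real.norm_eq_abs, Real.norm_eq_abs] at this
  calc |g q| ≤ M * |q - p| * |q - p| := this
  _ = M * (q - p) ^ 2 := by rw [mul_assoc, ← abs_mul, ← sq]; rw [abs_of_nonneg (sq_nonneg _)]

section Flow

variable {ξ : ℝ → ℝ} {ψ : ℝ → ℝ → ℝ}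

lemma flow_cont (hψ : ∀ (t x : ℝ), HasDerivAt (fun s => ψ s x) (ξ (ψ t x)) t) (x : ℝ) :
    Continuous fun s => ψ s x :=
  Differentiable.continuous fun t => (hψ t x).differentiableAt

lemma contDiff_deriv2 (hξ : ContDiff ℝ 2 ξ) : ContDiff ℝ 1 (deriv ξ) :=
  ((contDiff_succ_iff_deriv (n := 1)).mp (by exact_mod_cast hξ)).2.2

lemma hasDerivAt_F (hξ : ContDiff ℝ 2 ξ)
    (hψ : ∀ (t x : ℝ), HasDerivAt (fun s => ψ s x) (ξ (ψ t x)) t) (t x : ℝ) :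
    HasDerivAt (fun u => ∫ s in (0:ℝ)..u, deriv ξ (ψ s x)) (deriv ξ (ψ t x)) t :=
  (Continuous.integral_hasStrictDerivAt
    ((hξ.continuous_deriv one_le_two).comp (flow_cont hψ x)) 0 t).hasDerivAt

lemma F_abs_le {L : ℝ} (hLb : ∀ x, |deriv ξ x| ≤ L) (u x : ℝ) :
    |∫ s in (0:ℝ)..u, deriv ξ (ψ s x)| ≤ L * |u| := by
  have := intervalIntegral.norm_integral_le_of_norm_le_const
    (C := L) (f := fun s => deriv ξ (ψ s x)) (a := 0) (b := u)
    (fun s _ => by simpa [Real.norm_eq_abs] using hLb (ψ s x))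
  simpa [Real.norm_eq_abs] using this

lemma xi_lipschitz (hξ : ContDiff ℝ 2 ξ) {L : ℝ} (hLb : ∀ x, |deriv ξ x| ≤ L) :
    LipschitzWith (Real.toNNReal L) ξ := by
  apply lipschitzWith_of_nnnorm_deriv_le (hξ.differentiable two_ne_zero)
  intro x
  rw [← NNReal.coe_le_coe]
  have hL0 : 0 ≤ L := le_trans (abs_nonneg _) (hLb x)
  simpa [coe_nnnorm, Real.norm_eq_abs, Real.coe_toNNReal L hL0] using hLb x

lemma flow_semigroup (hξ : ContDiff ℝ 2 ξ) {L : ℝ} (hLb : ∀ x, |deriv ξ x| ≤ L)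
    (hψ0 : ∀ x : ℝ, ψ 0 x = x)
    (hψ : ∀ (t x : ℝ), HasDerivAt (fun s => ψ s x) (ξ (ψ t x)) t)
    (s u x : ℝ) : ψ (s + u) x = ψ s (ψ u x) := by
  refine ode_unique_global (xi_lipschitz hξ hLb)
    (f := fun s => ψ (s + u) x) (g := fun s => ψ s (ψ u x)) ?_ (fun t => hψ t (ψ u x)) ?_ s
  · intro t
    simpa [Function.comp_def] using (hψ (t + u) x).comp t ((hasDerivAt_id t).add_const u)
  · simp [hψ0]

lemma xi_flow (hξ : ContDiff ℝ 2 ξ)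
    (hψ0 : ∀ x : ℝ, ψ 0 x = x)
    (hψ : ∀ (t x : ℝ), HasDerivAt (fun s => ψ s x) (ξ (ψ t x)) t) (t x : ℝ) :
    ξ (ψ t x) = ξ x * Real.exp (∫ s in (0:ℝ)..t, deriv ξ (ψ s x)) := by
  set F : ℝ → ℝ := fun u => ∫ s in (0:ℝ)..u, deriv ξ (ψ s x) with hF
  set g : ℝ → ℝ := fun u => ξ (ψ u x) * Real.exp (-(F u)) with hgdef
  have hgd : ∀ u, HasDerivAt g
      (deriv ξ (ψ u x) * ξ (ψ u x) * Real.exp (-(F u))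
        + ξ (ψ u x) * (Real.exp (-(F u)) * -(deriv ξ (ψ u x)))) u := by
    intro u
    have h1 : HasDerivAt (fun u => ξ (ψ u x)) (deriv ξ (ψ u x) * ξ (ψ u x)) u :=
      ((hξ.differentiable two_ne_zero) (ψ u x)).hasDerivAt.comp u (hψ u x)
    have h2 : HasDerivAt (fun u => Real.exp (-(F u)))
        (Real.exp (-(F u)) * -(deriv ξ (ψ u x))) u := ((hasDerivAt_F hξ hψ u x).neg).exp
    exact h1.mul h2
  have hconst : g t = g 0 := by
    apply is_const_of_deriv_eq_zero (fun u => (hgd u).differentiableAt)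
    intro u
    rw [(hgd u).deriv]; ring
  have hg0 : g 0 = ξ x := by simp [hgdef, hF, hψ0]
  have h := hconst.trans hg0
  have hexp : Real.exp (-(F t)) * Real.exp (F t) = 1 := by
    rw [← Real.exp_add]; simp
  calc ξ (ψ t x) = ξ (ψ t x) * (Real.exp (-(F t)) * Real.exp (F t)) := by rw [hexp]; ring
  _ = g t * Real.exp (F t) := by rw [hgdef]; ring
  _ = ξ x * Real.exp (F t) := by rw [h]

lemma F_semigroup (hξ : ContDiff ℝ 2 ξ) {L : ℝ} (hLb : ∀ x, |deriv ξ x| ≤ L)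
    (hψ0 : ∀ x : ℝ, ψ 0 x = x)
    (hψ : ∀ (t x : ℝ), HasDerivAt (fun s => ψ s x) (ξ (ψ t x)) t)
    (τ u x : ℝ) :
    (∫ s in (0:ℝ)..τ, deriv ξ (ψ s (ψ u x)))
      = (∫ s in (0:ℝ)..(τ + u), deriv ξ (ψ s x)) - ∫ s in (0:ℝ)..u, deriv ξ (ψ s x) := by
  have hcont : Continuous fun s => deriv ξ (ψ s x) :=
    (hξ.continuous_deriv one_le_two).comp (flow_cont hψ x)
  have h1 : (∫ s in (0:ℝ)..τ, deriv ξ (ψ s (ψ u x)))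
      = ∫ s in (0:ℝ)..τ, deriv ξ (ψ (s + u) x) := by
    apply intervalIntegral.integral_congr
    intro s _
    simp only [flow_semigroup hξ hLb hψ0 hψ s u x]
  rw [h1, intervalIntegral.integral_comp_add_right (fun s => deriv ξ (ψ s x)) u, zero_add]
  rw [← intervalIntegral.integral_interval_sub_left
    (hcont.intervalIntegrable 0 (τ + u)) (hcont.intervalIntegrable 0 u)]

end Flow

section FlowDeriv

variable {ξ : ℝ → ℝ} {ψ : ℝ → ℝ → ℝ}

lemma flow_lip (hξ : ContDiff ℝ 2 ξ) {L : ℝ} (hL1 : 1 ≤ L) (hLb : ∀ x, |deriv ξ x| ≤ L)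
    (hψ0 : ∀ x : ℝ, ψ 0 x = x)
    (hψ : ∀ (t x : ℝ), HasDerivAt (fun s => ψ s x) (ξ (ψ t x)) t)
    {T : ℝ} (x y : ℝ) {s : ℝ} (hs : |s| ≤ T) :
    |ψ s y - ψ s x| ≤ |y - x| * Real.exp (L * T) := by
  have hL0 : 0 ≤ L := le_trans zero_le_one hL1
  have hlip := xi_lipschitz hξ hLb
  have key : |ψ s y - ψ s x| ≤ gronwallBound (|y - x|) L 0 |s| := by
    apply gronwall_abs (f := fun s => ψ s y - ψ s x)
      (f' := fun s => ξ (ψ s y) - ξ (ψ s x)) (fun u => (hψ u y).sub (hψ u x)) _ _ hs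
    · simp [hψ0]
    · intro u _
      have := hlip.dist_le_mul (ψ u y) (ψ u x)
      rw [Real.dist_eq, Real.dist_eq, Real.coe_toNNReal L hL0] at this
      linarith
  rw [gronwallBound_ε0] at key
  refine le_trans key (mul_le_mul_of_nonneg_left ?_ (abs_nonneg _))
  exact Real.exp_le_exp.mpr (mul_le_mul_of_nonneg_left hs hL0)

lemma flow_hasDerivAt_x (hξ : ContDiff ℝ 2 ξ) {L M : ℝ} (hL1 : 1 ≤ L)
    (hLb : ∀ x, |deriv ξ x| ≤ L) (hM : ∀ x, |deriv (deriv ξ) x| ≤ M)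
    (hψ0 : ∀ x : ℝ, ψ 0 x = x)
    (hψ : ∀ (t x : ℝ), HasDerivAt (fun s => ψ s x) (ξ (ψ t x)) t)
    (t x : ℝ) :
    HasDerivAt (fun y => ψ t y) (Real.exp (∫ s in (0:ℝ)..t, deriv ξ (ψ s x))) x := by
  have hL0 : 0 ≤ L := le_trans zero_le_one hL1
  have hM0 : 0 ≤ M := le_trans (abs_nonneg _) (hM 0)
  set T := |t| with hT
  set J : ℝ → ℝ := fun s => Real.exp (∫ σ in (0:ℝ)..s, deriv ξ (ψ σ x)) with hJ
  set C : ℝ := M * Real.exp (3 * (L * T)) with hC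
  -- main quadratic estimate
  have key : ∀ y, |ψ t y - ψ t x - (y - x) * J t| ≤ C * (y - x) ^ 2 := by
    intro y
    set ε : ℝ := M * (|y - x| * Real.exp (L * T)) ^ 2 with hε
    have hε0 : 0 ≤ ε := by positivity
    have hΔd : ∀ s, HasDerivAt (fun s => ψ s y - ψ s x - (y - x) * J s)
        (ξ (ψ s y) - ξ (ψ s x) - (y - x) * (J s * deriv ξ (ψ s x))) s := by
      intro s
      exact ((hψ s y).sub (hψ s x)).sub (((hasDerivAt_F hξ hψ s x).exp).const_mul (y - x))
    have hbound : ∀ s, |s| ≤ T →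
        |ξ (ψ s y) - ξ (ψ s x) - (y - x) * (J s * deriv ξ (ψ s x))|
          ≤ L * |ψ s y - ψ s x - (y - x) * J s| + ε := by
      intro s hs
      have hR := taylor_bound hξ hM (ψ s x) (ψ s y)
      have hflip := flow_lip hξ hL1 hLb hψ0 hψ (T := T) x y hs
      have hsq : (ψ s y - ψ s x) ^ 2 ≤ (|y - x| * Real.exp (L * T)) ^ 2 := by
        rw [← sq_abs]
        exact pow_le_pow_left₀ (abs_nonneg _) hflip 2
      have hRε : |ξ (ψ s y) - ξ (ψ s x) - deriv ξ (ψ s x) * (ψ s y - ψ s x)| ≤ ε := by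
        refine le_trans hR ?_
        rw [hε]
        exact mul_le_mul_of_nonneg_left hsq hM0
      have hsplit : ξ (ψ s y) - ξ (ψ s x) - (y - x) * (J s * deriv ξ (ψ s x))
          = deriv ξ (ψ s x) * (ψ s y - ψ s x - (y - x) * J s)
            + (ξ (ψ s y) - ξ (ψ s x) - deriv ξ (ψ s x) * (ψ s y - ψ s x)) := by ring
      rw [hsplit]
      calc _ ≤ |deriv ξ (ψ s x) * (ψ s y - ψ s x - (y - x) * J s)|
            + |ξ (ψ s y) - ξ (ψ s x) - deriv ξ (ψ s x) * (ψ s y - ψ s x)| := abs_add_le _ _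
      _ ≤ L * |ψ s y - ψ s x - (y - x) * J s| + ε := by
          rw [abs_mul]
          exact add_le_add (mul_le_mul_of_nonneg_right (hLb _) (abs_nonneg _)) hRε
    have hgron := gronwall_abs (f := fun s => ψ s y - ψ s x - (y - x) * J s)
      (f' := fun s => ξ (ψ s y) - ξ (ψ s x) - (y - x) * (J s * deriv ξ (ψ s x)))
      hΔd (δ := 0) (by simp [hψ0, hJ]) hbound (le_refl T)
    have hgb : gronwallBound 0 L ε |t| ≤ ε * Real.exp (L * T) := by
      rw [gronwallBound_of_K_ne_0 (by linarith : L ≠ 0)]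
      have h1 : ε / L ≤ ε := by
        rw [div_le_iff₀ (by linarith : (0:ℝ) < L)]
        nlinarith
      have h2 : Real.exp (L * |t|) - 1 ≤ Real.exp (L * T) := by
        rw [hT]; nlinarith [Real.exp_pos (L * |t|)]
      calc (0:ℝ) * Real.exp (L * |t|) + ε / L * (Real.exp (L * |t|) - 1)
          = ε / L * (Real.exp (L * |t|) - 1) := by ring
      _ ≤ ε * (Real.exp (L * |t|) - 1) := by
          apply mul_le_mul_of_nonneg_right h1
          nlinarith [Real.exp_pos (L * |t|), Real.one_le_exp (by positivity : (0:ℝ) ≤ L * |t|)]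
      _ ≤ ε * Real.exp (L * T) := by
          apply mul_le_mul_of_nonneg_left _ hε0
          rw [hT]; nlinarith [Real.exp_pos (L * |t|)]
    refine le_trans hgron (le_trans hgb (le_of_eq ?_))
    rw [hε, hC, mul_pow, sq_abs]
    rw [show (Real.exp (L*T))^2 = Real.exp (2*(L*T)) by
      rw [← Real.exp_nat_mul]; norm_num]
    rw [show (3:ℝ) * (L*T) = 2*(L*T) + L*T by ring, Real.exp_add]
    ring
  -- convert to HasDerivAt via littleO
  rw [hasDerivAt_iff_isLittleO]
  have h1 : (fun y => ψ t y - ψ t x - (y - x) * J t) =O[nhds x] fun y => (y - x) ^ 2 := by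
    apply Asymptotics.isBigO_of_le' (c := C)
    intro y
    rw [Real.norm_eq_abs, Real.norm_eq_abs, abs_of_nonneg (sq_nonneg (y - x))]
    exact key y
  have h2 : (fun y : ℝ => (y - x) ^ 2) =o[nhds x] fun y => y - x := by
    rw [Asymptotics.isLittleO_iff]
    intro c hc
    rw [Metric.eventually_nhds_iff]
    refine ⟨c, hc, fun y hy => ?_⟩
    rw [Real.dist_eq] at hy
    rw [Real.norm_eq_abs, Real.norm_eq_abs, sq, abs_mul]
    exact mul_le_mul_of_nonneg_right (le_of_lt hy) (abs_nonneg _)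
  have := h1.trans_isLittleO h2
  simpa [hJ, smul_eq_mul, mul_comm] using this

end FlowDeriv

noncomputable def Ff (ξ : ℝ → ℝ) (ψ : ℝ → ℝ → ℝ) (t x : ℝ) : ℝ :=
  ∫ s in (0:ℝ)..t, deriv ξ (ψ s x)

noncomputable def Kf (ξ η : ℝ → ℝ) (ψ : ℝ → ℝ → ℝ) (t x : ℝ) : ℝ :=
  ∫ σ in (0:ℝ)..t, deriv η (ψ σ x) * Real.exp (Ff ξ ψ σ x)

noncomputable def Fxf (ξ : ℝ → ℝ) (ψ : ℝ → ℝ → ℝ) (t x : ℝ) : ℝ :=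
  ∫ s in (0:ℝ)..t, deriv (deriv ξ) (ψ s x) * Real.exp (Ff ξ ψ s x)

noncomputable def Kxf (ξ η : ℝ → ℝ) (ψ : ℝ → ℝ → ℝ) (t x : ℝ) : ℝ :=
  ∫ σ in (0:ℝ)..t,
    (deriv (deriv η) (ψ σ x) * Real.exp (Ff ξ ψ σ x) * Real.exp (Ff ξ ψ σ x)
      + deriv η (ψ σ x) * (Real.exp (Ff ξ ψ σ x) * Fxf ξ ψ σ x))

lemma abs_le_abs_of_uIoc {s t : ℝ} (h : s ∈ Set.uIoc 0 t) : |s| ≤ |t| := by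
  rw [Set.mem_uIoc] at h
  have h1 := le_abs_self t
  have h2 := neg_abs_le t
  rcases h with ⟨ha, hb⟩ | ⟨ha, hb⟩ <;> rw [abs_le] <;> constructor <;> linarith

section Main

variable {ξ η : ℝ → ℝ} {ψ : ℝ → ℝ → ℝ} {L M N P : ℝ}

lemma cont_F_t (hξ : ContDiff ℝ 2 ξ)
    (hψ : ∀ (t x : ℝ), HasDerivAt (fun s => ψ s x) (ξ (ψ t x)) t) (x : ℝ) :
    Continuous fun u => Ff ξ ψ u x :=
  Differentiable.continuous fun t => (hasDerivAt_F hξ hψ t x).differentiableAt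

lemma exp_F_le (hξ : ContDiff ℝ 2 ξ) {L : ℝ} (hLb : ∀ x, |deriv ξ x| ≤ L)
    {s T : ℝ} (hs : |s| ≤ T) (hL0 : 0 ≤ L) (y : ℝ) :
    Real.exp (Ff ξ ψ s y) ≤ Real.exp (L * T) := by
  apply Real.exp_le_exp.mpr
  calc Ff ξ ψ s y ≤ |Ff ξ ψ s y| := le_abs_self _
  _ ≤ L * |s| := F_abs_le hLb s y
  _ ≤ L * T := mul_le_mul_of_nonneg_left hs hL0

lemma hasDerivAt_F_x (hξ : ContDiff ℝ 2 ξ) (hL1 : 1 ≤ L)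
    (hLb : ∀ x, |deriv ξ x| ≤ L) (hM : ∀ x, |deriv (deriv ξ) x| ≤ M)
    (hψ0 : ∀ x : ℝ, ψ 0 x = x)
    (hψ : ∀ (t x : ℝ), HasDerivAt (fun s => ψ s x) (ξ (ψ t x)) t)
    (t x : ℝ) :
    HasDerivAt (fun y => Ff ξ ψ t y) (Fxf ξ ψ t x) x := by
  have hL0 : (0:ℝ) ≤ L := le_trans zero_le_one hL1
  have hM0 : 0 ≤ M := le_trans (abs_nonneg _) (hM 0)
  have hcont2 : Continuous (deriv (deriv ξ)) := (contDiff_deriv2 hξ).continuous_deriv le_rfl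
  unfold Ff Fxf
  apply param_hasDerivAt (C := M * Real.exp (L * |t|))
    (G := fun y s => deriv ξ (ψ s y))
    (G' := fun y s => deriv (deriv ξ) (ψ s y) * Real.exp (Ff ξ ψ s y))
  · intro y
    exact (hξ.continuous_deriv one_le_two).comp (flow_cont hψ y)
  · exact (hcont2.comp (flow_cont hψ x)).mul
      (Real.continuous_exp.comp (cont_F_t hξ hψ x))
  · intro y s hs
    rw [abs_mul]
    have h1 : |deriv (deriv ξ) (ψ s y)| ≤ M := hM _
    have h2 : |Real.exp (Ff ξ ψ s y)| ≤ Real.exp (L * |t|) := by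
      rw [abs_of_pos (Real.exp_pos _)]
      exact exp_F_le hξ hLb (abs_le_abs_of_uIoc hs) hL0 y
    exact mul_le_mul h1 h2 (abs_nonneg _) hM0
  · intro s y
    exact ((contDiff_deriv2 hξ).differentiable one_ne_zero _).hasDerivAt.comp y
      (flow_hasDerivAt_x hξ hL1 hLb hM hψ0 hψ s y)

lemma Fx_abs_le (hξ : ContDiff ℝ 2 ξ) (hLb : ∀ x, |deriv ξ x| ≤ L)
    (hM : ∀ x, |deriv (deriv ξ) x| ≤ M) (hL0 : 0 ≤ L) (hM0 : 0 ≤ M)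
    {s T : ℝ} (hs : |s| ≤ T) (y : ℝ) :
    |Fxf ξ ψ s y| ≤ M * Real.exp (L * T) * |s| := by
  have := intervalIntegral.norm_integral_le_of_norm_le_const
    (C := M * Real.exp (L * T))
    (f := fun σ => deriv (deriv ξ) (ψ σ y) * Real.exp (Ff ξ ψ σ y)) (a := 0) (b := s)
    (fun σ hσ => by
      rw [Real.norm_eq_abs, abs_mul]
      have h2 : |Real.exp (Ff ξ ψ σ y)| ≤ Real.exp (L * T) := by
        rw [abs_of_pos (Real.exp_pos _)]
        exact exp_F_le hξ hLb (le_trans (abs_le_abs_of_uIoc hσ) hs) hL0 y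
      exact mul_le_mul (hM _) h2 (abs_nonneg _) hM0)
  simpa [Real.norm_eq_abs, Fxf] using this

end Main

section Main2

variable {ξ η : ℝ → ℝ} {ψ : ℝ → ℝ → ℝ} {L M N N2 : ℝ}

lemma cont_Fx_t (hξ : ContDiff ℝ 2 ξ)
    (hψ : ∀ (t x : ℝ), HasDerivAt (fun s => ψ s x) (ξ (ψ t x)) t) (x : ℝ) :
    Continuous fun u => Fxf ξ ψ u x := by
  have hcont2 : Continuous (deriv (deriv ξ)) := (contDiff_deriv2 hξ).continuous_deriv le_rfl
  have : Continuous fun s => deriv (deriv ξ) (ψ s x) * Real.exp (Ff ξ ψ s x) :=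
    (hcont2.comp (flow_cont hψ x)).mul (Real.continuous_exp.comp (cont_F_t hξ hψ x))
  exact Differentiable.continuous fun t =>
    ((Continuous.integral_hasStrictDerivAt this 0 t).hasDerivAt).differentiableAt

lemma hasDerivAt_Fx_t (hξ : ContDiff ℝ 2 ξ)
    (hψ : ∀ (t x : ℝ), HasDerivAt (fun s => ψ s x) (ξ (ψ t x)) t) (t x : ℝ) :
    HasDerivAt (fun u => Fxf ξ ψ u x)
      (deriv (deriv ξ) (ψ t x) * Real.exp (Ff ξ ψ t x)) t := by
  have hcont2 : Continuous (deriv (deriv ξ)) := (contDiff_deriv2 hξ).continuous_deriv le_rfl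
  have : Continuous fun s => deriv (deriv ξ) (ψ s x) * Real.exp (Ff ξ ψ s x) :=
    (hcont2.comp (flow_cont hψ x)).mul (Real.continuous_exp.comp (cont_F_t hξ hψ x))
  exact (Continuous.integral_hasStrictDerivAt this 0 t).hasDerivAt

lemma contK_integrand (hξ : ContDiff ℝ 2 ξ) (hη : ContDiff ℝ 2 η)
    (hψ : ∀ (t x : ℝ), HasDerivAt (fun s => ψ s x) (ξ (ψ t x)) t) (x : ℝ) :
    Continuous fun σ => deriv η (ψ σ x) * Real.exp (Ff ξ ψ σ x) :=
  ((hη.continuous_deriv one_le_two).comp (flow_cont hψ x)).mul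
    (Real.continuous_exp.comp (cont_F_t hξ hψ x))

lemma hasDerivAt_K_t (hξ : ContDiff ℝ 2 ξ) (hη : ContDiff ℝ 2 η)
    (hψ : ∀ (t x : ℝ), HasDerivAt (fun s => ψ s x) (ξ (ψ t x)) t) (t x : ℝ) :
    HasDerivAt (fun u => Kf ξ η ψ u x)
      (deriv η (ψ t x) * Real.exp (Ff ξ ψ t x)) t :=
  (Continuous.integral_hasStrictDerivAt (contK_integrand hξ hη hψ x) 0 t).hasDerivAt

lemma hasDerivAt_K_x (hξ : ContDiff ℝ 2 ξ) (hη : ContDiff ℝ 2 η) (hL1 : 1 ≤ L)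
    (hLb : ∀ x, |deriv ξ x| ≤ L) (hM : ∀ x, |deriv (deriv ξ) x| ≤ M)
    (hN : ∀ x, |deriv η x| ≤ N) (hN2 : ∀ x, |deriv (deriv η) x| ≤ N2)
    (hψ0 : ∀ x : ℝ, ψ 0 x = x)
    (hψ : ∀ (t x : ℝ), HasDerivAt (fun s => ψ s x) (ξ (ψ t x)) t)
    (t x : ℝ) :
    HasDerivAt (fun y => Kf ξ η ψ t y) (Kxf ξ η ψ t x) x := by
  have hL0 : (0:ℝ) ≤ L := le_trans zero_le_one hL1
  have hM0 : 0 ≤ M := le_trans (abs_nonneg _) (hM 0)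
  have hN0 : 0 ≤ N := le_trans (abs_nonneg _) (hN 0)
  have hN20 : 0 ≤ N2 := le_trans (abs_nonneg _) (hN2 0)
  have hcont2 : Continuous (deriv (deriv η)) := (contDiff_deriv2 hη).continuous_deriv le_rfl
  unfold Kf Kxf
  apply param_hasDerivAt
    (C := N2 * Real.exp (L * |t|) * Real.exp (L * |t|)
      + N * (Real.exp (L * |t|) * (M * Real.exp (L * |t|) * |t|)))
    (G := fun y σ => deriv η (ψ σ y) * Real.exp (Ff ξ ψ σ y))
    (G' := fun y σ => deriv (deriv η) (ψ σ y) * Real.exp (Ff ξ ψ σ y) * Real.exp (Ff ξ ψ σ y)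
      + deriv η (ψ σ y) * (Real.exp (Ff ξ ψ σ y) * Fxf ξ ψ σ y))
  · intro y
    exact contK_integrand hξ hη hψ y
  · exact (((hcont2.comp (flow_cont hψ x)).mul
      (Real.continuous_exp.comp (cont_F_t hξ hψ x))).mul
      (Real.continuous_exp.comp (cont_F_t hξ hψ x))).add
      (((hη.continuous_deriv one_le_two).comp (flow_cont hψ x)).mul
        ((Real.continuous_exp.comp (cont_F_t hξ hψ x)).mul (cont_Fx_t hξ hψ x)))
  · intro y σ hσ
    have hσt : |σ| ≤ |t| := abs_le_abs_of_uIoc hσ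
    have hE : |Real.exp (Ff ξ ψ σ y)| ≤ Real.exp (L * |t|) := by
      rw [abs_of_pos (Real.exp_pos _)]
      exact exp_F_le hξ hLb hσt hL0 y
    have hFx : |Fxf ξ ψ σ y| ≤ M * Real.exp (L * |t|) * |t| := by
      refine le_trans (Fx_abs_le hξ hLb hM hL0 hM0 (le_refl |σ|) y) ?_
      have h1 : Real.exp (L * |σ|) ≤ Real.exp (L * |t|) :=
        Real.exp_le_exp.mpr (mul_le_mul_of_nonneg_left hσt hL0)
      have h2 : (0:ℝ) ≤ Real.exp (L * |σ|) := le_of_lt (Real.exp_pos _)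
      gcongr
    calc |deriv (deriv η) (ψ σ y) * Real.exp (Ff ξ ψ σ y) * Real.exp (Ff ξ ψ σ y)
          + deriv η (ψ σ y) * (Real.exp (Ff ξ ψ σ y) * Fxf ξ ψ σ y)|
        ≤ |deriv (deriv η) (ψ σ y)| * |Real.exp (Ff ξ ψ σ y)| * |Real.exp (Ff ξ ψ σ y)|
          + |deriv η (ψ σ y)| * (|Real.exp (Ff ξ ψ σ y)| * |Fxf ξ ψ σ y|) := by
          refine le_trans (abs_add_le _ _) ?_
          rw [abs_mul, abs_mul, abs_mul, abs_mul]
    _ ≤ N2 * Real.exp (L * |t|) * Real.exp (L * |t|)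
          + N * (Real.exp (L * |t|) * (M * Real.exp (L * |t|) * |t|)) := by
          have e1 : (0:ℝ) ≤ |Real.exp (Ff ξ ψ σ y)| := abs_nonneg _
          have e2 : (0:ℝ) ≤ Real.exp (L * |t|) := le_of_lt (Real.exp_pos _)
          gcongr
          · exact hN2 _
          · exact hN _
  · intro σ y
    have h1 : HasDerivAt (fun y => deriv η (ψ σ y))
        (deriv (deriv η) (ψ σ y) * Real.exp (Ff ξ ψ σ y)) y :=
      ((contDiff_deriv2 hη).differentiable one_ne_zero _).hasDerivAt.comp y
        (flow_hasDerivAt_x hξ hL1 hLb hM hψ0 hψ σ y)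
    have h2 : HasDerivAt (fun y => Real.exp (Ff ξ ψ σ y))
        (Real.exp (Ff ξ ψ σ y) * Fxf ξ ψ σ y) y :=
      (hasDerivAt_F_x hξ hL1 hLb hM hψ0 hψ σ y).exp
    exact h1.mul h2

lemma hasDerivAt_Kx_t (hξ : ContDiff ℝ 2 ξ) (hη : ContDiff ℝ 2 η)
    (hψ : ∀ (t x : ℝ), HasDerivAt (fun s => ψ s x) (ξ (ψ t x)) t) (t x : ℝ) :
    HasDerivAt (fun u => Kxf ξ η ψ u x)
      (deriv (deriv η) (ψ t x) * Real.exp (Ff ξ ψ t x) * Real.exp (Ff ξ ψ t x)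
        + deriv η (ψ t x) * (Real.exp (Ff ξ ψ t x) * Fxf ξ ψ t x)) t := by
  have hcont2 : Continuous (deriv (deriv η)) := (contDiff_deriv2 hη).continuous_deriv le_rfl
  have hc : Continuous fun σ =>
      deriv (deriv η) (ψ σ x) * Real.exp (Ff ξ ψ σ x) * Real.exp (Ff ξ ψ σ x)
        + deriv η (ψ σ x) * (Real.exp (Ff ξ ψ σ x) * Fxf ξ ψ σ x) :=
    (((hcont2.comp (flow_cont hψ x)).mul
      (Real.continuous_exp.comp (cont_F_t hξ hψ x))).mul
      (Real.continuous_exp.comp (cont_F_t hξ hψ x))).add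
      (((hη.continuous_deriv one_le_two).comp (flow_cont hψ x)).mul
        ((Real.continuous_exp.comp (cont_F_t hξ hψ x)).mul (cont_Fx_t hξ hψ x)))
  exact (Continuous.integral_hasStrictDerivAt hc 0 t).hasDerivAt

end Main2

section Main3

variable {ξ η : ℝ → ℝ} {ψ : ℝ → ℝ → ℝ} {L M N N2 : ℝ}

lemma xi_flow' (hξ : ContDiff ℝ 2 ξ)
    (hψ0 : ∀ x : ℝ, ψ 0 x = x)
    (hψ : ∀ (t x : ℝ), HasDerivAt (fun s => ψ s x) (ξ (ψ t x)) t) (t x : ℝ) :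
    ξ (ψ t x) = ξ x * Real.exp (Ff ξ ψ t x) := by
  unfold Ff; exact xi_flow hξ hψ0 hψ t x

lemma identity_I (hξ : ContDiff ℝ 2 ξ) (hη : ContDiff ℝ 2 η) (hL1 : 1 ≤ L)
    (hLb : ∀ x, |deriv ξ x| ≤ L) (hM : ∀ x, |deriv (deriv ξ) x| ≤ M)
    (hψ0 : ∀ x : ℝ, ψ 0 x = x)
    (hψ : ∀ (t x : ℝ), HasDerivAt (fun s => ψ s x) (ξ (ψ t x)) t)
    (t x : ℝ) :
    deriv ξ (ψ t x) * Kf ξ η ψ t x - deriv η (ψ t x) * Real.exp (Ff ξ ψ t x)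
      - ξ x * Fxf ξ ψ t x * Kf ξ η ψ t x + ξ x * Kxf ξ η ψ t x + deriv η x = 0 := by
  set Γ : ℝ → ℝ := fun t =>
    deriv ξ (ψ t x) * Kf ξ η ψ t x - deriv η (ψ t x) * Real.exp (Ff ξ ψ t x)
      - ξ x * Fxf ξ ψ t x * Kf ξ η ψ t x + ξ x * Kxf ξ η ψ t x + deriv η x with hΓdef
  have hΓ : ∀ u, HasDerivAt Γ
      ((((deriv (deriv ξ) (ψ u x) * ξ (ψ u x)) * Kf ξ η ψ u x
            + deriv ξ (ψ u x) * (deriv η (ψ u x) * Real.exp (Ff ξ ψ u x)))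
        - ((deriv (deriv η) (ψ u x) * ξ (ψ u x)) * Real.exp (Ff ξ ψ u x)
            + deriv η (ψ u x) * (Real.exp (Ff ξ ψ u x) * deriv ξ (ψ u x)))
        - ξ x * ((deriv (deriv ξ) (ψ u x) * Real.exp (Ff ξ ψ u x)) * Kf ξ η ψ u x
            + Fxf ξ ψ u x * (deriv η (ψ u x) * Real.exp (Ff ξ ψ u x))))
        + ξ x * (deriv (deriv η) (ψ u x) * Real.exp (Ff ξ ψ u x) * Real.exp (Ff ξ ψ u x)
            + deriv η (ψ u x) * (Real.exp (Ff ξ ψ u x) * Fxf ξ ψ u x))) u := by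
    intro u
    have hd1 : HasDerivAt (fun u => deriv ξ (ψ u x))
        (deriv (deriv ξ) (ψ u x) * ξ (ψ u x)) u :=
      ((contDiff_deriv2 hξ).differentiable one_ne_zero _).hasDerivAt.comp u (hψ u x)
    have hd2 : HasDerivAt (fun u => deriv η (ψ u x))
        (deriv (deriv η) (ψ u x) * ξ (ψ u x)) u :=
      ((contDiff_deriv2 hη).differentiable one_ne_zero _).hasDerivAt.comp u (hψ u x)
    have hdF : HasDerivAt (fun u => Real.exp (Ff ξ ψ u x))
        (Real.exp (Ff ξ ψ u x) * deriv ξ (ψ u x)) u := by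
      apply HasDerivAt.exp
      unfold Ff; exact hasDerivAt_F hξ hψ u x
    have h1 := hd1.mul (hasDerivAt_K_t hξ hη hψ u x)
    have h2 := hd2.mul hdF
    have h3 := (((hasDerivAt_Fx_t hξ hψ u x).mul
      (hasDerivAt_K_t hξ hη hψ u x)).const_mul (ξ x))
    have h4 := (hasDerivAt_Kx_t hξ hη hψ u x).const_mul (ξ x)
    have hds := (((h1.sub h2).sub h3).add h4).add_const (deriv η x)
    have hfun : (fun u => deriv ξ (ψ u x) * Kf ξ η ψ u x
        - deriv η (ψ u x) * Real.exp (Ff ξ ψ u x)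
        - ξ x * (Fxf ξ ψ u x * Kf ξ η ψ u x) + ξ x * Kxf ξ η ψ u x + deriv η x) = Γ := by
      funext u; rw [hΓdef]; ring
    rw [← hfun]
    convert hds using 1
    all_goals rfl
  have hzero : ∀ u, deriv Γ u = 0 := by
    intro u
    rw [(hΓ u).deriv]
    have e1 := xi_flow' hξ hψ0 hψ u x
    linear_combination (deriv (deriv ξ) (ψ u x) * Kf ξ η ψ u x
      - deriv (deriv η) (ψ u x) * Real.exp (Ff ξ ψ u x)) * e1
  have hconst : Γ t = Γ 0 :=
    is_const_of_deriv_eq_zero (fun u => (hΓ u).differentiableAt) hzero t 0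
  have hΓ0 : Γ 0 = 0 := by
    simp [hΓdef, Kf, Fxf, Kxf, Ff, hψ0]
  have hfin : Γ t = 0 := hconst.trans hΓ0
  simpa [hΓdef] using hfin
end Main3

section Main4

variable {ξ η a₀ : ℝ → ℝ} {ψ : ℝ → ℝ → ℝ} {a b₀ : ℝ → ℝ → ℝ} {L : ℝ}

lemma hasDerivAt_Ff_t (hξ : ContDiff ℝ 2 ξ)
    (hψ : ∀ (t x : ℝ), HasDerivAt (fun s => ψ s x) (ξ (ψ t x)) t) (t x : ℝ) :
    HasDerivAt (fun u => Ff ξ ψ u x) (deriv ξ (ψ t x)) t := by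
  unfold Ff; exact hasDerivAt_F hξ hψ t x

lemma b_closed {a b : ℝ → ℝ → ℝ} {a₀ b₀ : ℝ → ℝ}
    (hξ : ContDiff ℝ 2 ξ) (hLb : ∀ x, |deriv ξ x| ≤ L)
    (hψ0 : ∀ x : ℝ, ψ 0 x = x)
    (hψ : ∀ (t x : ℝ), HasDerivAt (fun s => ψ s x) (ξ (ψ t x)) t)
    (ha : ∀ (t x : ℝ),
      a t x = a₀ (ψ t x) * Real.exp (-∫ s in (0:ℝ)..t, deriv ξ (ψ s x)))
    (hb : ∀ (t x : ℝ),
      b t x = b₀ (ψ t x)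
        - ∫ τ in (0:ℝ)..t, deriv η (ψ (t - τ) x) * a τ (ψ (t - τ) x))
    (t x : ℝ) :
    b t x = b₀ (ψ t x)
      - a₀ (ψ t x) * Real.exp (-(Ff ξ ψ t x)) * Kf ξ η ψ t x := by
  rw [hb t x]
  congr 1
  have hint : ∀ τ : ℝ, deriv η (ψ (t - τ) x) * a τ (ψ (t - τ) x)
      = a₀ (ψ t x) * Real.exp (-(Ff ξ ψ t x))
        * (deriv η (ψ (t - τ) x) * Real.exp (Ff ξ ψ (t - τ) x)) := by
    intro τ
    rw [ha τ (ψ (t - τ) x)]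
    have h1 : ψ τ (ψ (t - τ) x) = ψ t x := by
      rw [← flow_semigroup hξ hLb hψ0 hψ τ (t - τ) x]
      norm_num
    have h2 : (∫ s in (0:ℝ)..τ, deriv ξ (ψ s (ψ (t - τ) x)))
        = Ff ξ ψ t x - Ff ξ ψ (t - τ) x := by
      have h3 := F_semigroup hξ hLb hψ0 hψ τ (t - τ) x
      rw [show τ + (t - τ) = t by ring] at h3
      exact h3
    rw [h1, h2, show -(Ff ξ ψ t x - Ff ξ ψ (t - τ) x)
      = -(Ff ξ ψ t x) + Ff ξ ψ (t - τ) x by ring, Real.exp_add]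
    ring
  simp only [hint]
  rw [intervalIntegral.integral_const_mul]
  congr 1
  have := intervalIntegral.integral_comp_sub_left
    (a := 0) (b := t) (fun σ => deriv η (ψ σ x) * Real.exp (Ff ξ ψ σ x)) t
  simpa [Kf] using this

end Main4


/-- The Duhamel formula
`b(t,x) := b₀(ψ(t,x)) − ∫₀ᵗ η′(ψ(t−τ,x))·a(τ,ψ(t−τ,x)) dτ` solves the
coefficient equation `∂ₜb = ξ·∂ₓb − η′·a`, `b(0,·) = b₀`. -/
theorem transport_coefficient_b (ξ η a₀ b₀ : ℝ → ℝ) (ψ : ℝ → ℝ → ℝ)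
    (a b : ℝ → ℝ → ℝ)
    (hξ : ContDiff ℝ 2 ξ)
    (hξb : ∃ M, ∀ x, |ξ x| ≤ M) (hξ'b : ∃ M, ∀ x, |deriv ξ x| ≤ M)
    (hξ''b : ∃ M, ∀ x, |deriv (deriv ξ) x| ≤ M)
    (hη : ContDiff ℝ 2 η)
    (hηb : ∃ M, ∀ x, |η x| ≤ M) (hη'b : ∃ M, ∀ x, |deriv η x| ≤ M)
    (hη''b : ∃ M, ∀ x, |deriv (deriv η) x| ≤ M)
    (ha₀ : ContDiff ℝ 1 a₀)
    (ha₀b : ∃ M, ∀ x, |a₀ x| ≤ M) (ha₀'b : ∃ M, ∀ x, |deriv a₀ x| ≤ M)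
    (hb₀ : ContDiff ℝ 1 b₀)
    (hψ0 : ∀ x : ℝ, ψ 0 x = x)
    (hψ : ∀ (t x : ℝ), HasDerivAt (fun s => ψ s x) (ξ (ψ t x)) t)
    (ha : ∀ (t x : ℝ),
      a t x = a₀ (ψ t x) * Real.exp (-∫ s in (0:ℝ)..t, deriv ξ (ψ s x)))
    (hb : ∀ (t x : ℝ),
      b t x = b₀ (ψ t x)
        - ∫ τ in (0:ℝ)..t, deriv η (ψ (t - τ) x) * a τ (ψ (t - τ) x)) :
    (∀ x : ℝ, b 0 x = b₀ x) ∧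
    (∀ (t x : ℝ),
      HasDerivAt (fun s => b s x)
        (ξ x * deriv (fun y => b t y) x - deriv η x * a t x) t) := by
  obtain ⟨L₀, hL₀⟩ := hξ'b
  obtain ⟨M, hM⟩ := hξ''b
  obtain ⟨N, hN⟩ := hη'b
  obtain ⟨N2, hN2⟩ := hη''b
  set L : ℝ := max L₀ 1 with hLdef
  have hL1 : (1:ℝ) ≤ L := le_max_right _ _
  have hLb : ∀ x, |deriv ξ x| ≤ L := fun x => le_trans (hL₀ x) (le_max_left _ _)
  constructor
  · intro x
    rw [hb 0 x]
    simp [hψ0]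
  · intro t x
    have hbc := b_closed (η := η) hξ hLb hψ0 hψ ha hb
    -- x derivative
    have hψx : HasDerivAt (fun y => ψ t y) (Real.exp (Ff ξ ψ t x)) x := by
      have := flow_hasDerivAt_x hξ hL1 hLb hM hψ0 hψ t x
      exact this
    have hb₀x : HasDerivAt (fun y => b₀ (ψ t y))
        (deriv b₀ (ψ t x) * Real.exp (Ff ξ ψ t x)) x :=
      ((hb₀.differentiable one_ne_zero) _).hasDerivAt.comp x hψx
    have ha₀x : HasDerivAt (fun y => a₀ (ψ t y))
        (deriv a₀ (ψ t x) * Real.exp (Ff ξ ψ t x)) x :=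
      ((ha₀.differentiable one_ne_zero) _).hasDerivAt.comp x hψx
    have hEx : HasDerivAt (fun y => Real.exp (-(Ff ξ ψ t y)))
        (Real.exp (-(Ff ξ ψ t x)) * -(Fxf ξ ψ t x)) x :=
      ((hasDerivAt_F_x hξ hL1 hLb hM hψ0 hψ t x).neg).exp
    have hKx := hasDerivAt_K_x hξ hη hL1 hLb hM hN hN2 hψ0 hψ t x
    have hBx : HasDerivAt (fun y => b t y)
        (deriv b₀ (ψ t x) * Real.exp (Ff ξ ψ t x)
          - (((deriv a₀ (ψ t x) * Real.exp (Ff ξ ψ t x)) * Real.exp (-(Ff ξ ψ t x))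
              + a₀ (ψ t x) * (Real.exp (-(Ff ξ ψ t x)) * -(Fxf ξ ψ t x))) * Kf ξ η ψ t x
            + (a₀ (ψ t x) * Real.exp (-(Ff ξ ψ t x))) * Kxf ξ η ψ t x)) x := by
      have hfun : (fun y => b t y)
          = fun y => b₀ (ψ t y) - a₀ (ψ t y) * Real.exp (-(Ff ξ ψ t y)) * Kf ξ η ψ t y :=
        funext fun y => hbc t y
      rw [hfun]
      exact hb₀x.sub ((ha₀x.mul hEx).mul hKx)
    -- t derivative
    have hb₀t : HasDerivAt (fun s => b₀ (ψ s x))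
        (deriv b₀ (ψ t x) * ξ (ψ t x)) t :=
      ((hb₀.differentiable one_ne_zero) _).hasDerivAt.comp t (hψ t x)
    have ha₀t : HasDerivAt (fun s => a₀ (ψ s x))
        (deriv a₀ (ψ t x) * ξ (ψ t x)) t :=
      ((ha₀.differentiable one_ne_zero) _).hasDerivAt.comp t (hψ t x)
    have hEt : HasDerivAt (fun s => Real.exp (-(Ff ξ ψ s x)))
        (Real.exp (-(Ff ξ ψ t x)) * -(deriv ξ (ψ t x))) t :=
      ((hasDerivAt_Ff_t hξ hψ t x).neg).exp
    have hKt := hasDerivAt_K_t hξ hη hψ t x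
    have hDt : HasDerivAt (fun s => b s x)
        (deriv b₀ (ψ t x) * ξ (ψ t x)
          - (((deriv a₀ (ψ t x) * ξ (ψ t x)) * Real.exp (-(Ff ξ ψ t x))
              + a₀ (ψ t x) * (Real.exp (-(Ff ξ ψ t x)) * -(deriv ξ (ψ t x)))) * Kf ξ η ψ t x
            + (a₀ (ψ t x) * Real.exp (-(Ff ξ ψ t x)))
              * (deriv η (ψ t x) * Real.exp (Ff ξ ψ t x)))) t := by
      have hfun : (fun s => b s x)
          = fun s => b₀ (ψ s x) - a₀ (ψ s x) * Real.exp (-(Ff ξ ψ s x)) * Kf ξ η ψ s x :=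
        funext fun s => hbc s x
      rw [hfun]
      exact hb₀t.sub ((ha₀t.mul hEt).mul hKt)
    -- assembly
    have hderiv : deriv (fun y => b t y) x = _ := hBx.deriv
    rw [hderiv, ha t x]
    rw [show (∫ s in (0:ℝ)..t, deriv ξ (ψ s x)) = Ff ξ ψ t x from rfl]
    have e1 := xi_flow' hξ hψ0 hψ t x
    have hI := identity_I (η := η) hξ hη hL1 hLb hM hψ0 hψ t x
    have hfinal : deriv b₀ (ψ t x) * ξ (ψ t x)
          - (((deriv a₀ (ψ t x) * ξ (ψ t x)) * Real.exp (-(Ff ξ ψ t x))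
              + a₀ (ψ t x) * (Real.exp (-(Ff ξ ψ t x)) * -(deriv ξ (ψ t x)))) * Kf ξ η ψ t x
            + (a₀ (ψ t x) * Real.exp (-(Ff ξ ψ t x)))
              * (deriv η (ψ t x) * Real.exp (Ff ξ ψ t x)))
        = ξ x * (deriv b₀ (ψ t x) * Real.exp (Ff ξ ψ t x)
          - (((deriv a₀ (ψ t x) * Real.exp (Ff ξ ψ t x)) * Real.exp (-(Ff ξ ψ t x))
              + a₀ (ψ t x) * (Real.exp (-(Ff ξ ψ t x)) * -(Fxf ξ ψ t x))) * Kf ξ η ψ t x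
            + (a₀ (ψ t x) * Real.exp (-(Ff ξ ψ t x))) * Kxf ξ η ψ t x))
          - deriv η x * (a₀ (ψ t x) * Real.exp (-(Ff ξ ψ t x))) := by
      linear_combination (deriv b₀ (ψ t x)
          - deriv a₀ (ψ t x) * Kf ξ η ψ t x * Real.exp (-(Ff ξ ψ t x))) * e1
        + (a₀ (ψ t x) * Real.exp (-(Ff ξ ψ t x))) * hI
    rw [← hfinal]
    exact hDt
end
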